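/- Let (G, ℓ) be a finite connected graph with positive edge resistances, let e = uv be an edge of G, and let (H, ℓ') be obtained from G by subdividing e into two edges e₁ = ux and e₂ = xv (x a new vertex of degree 2) with positive lengths satisfying ℓ_{e₁} + ℓ_{e₂} = ℓ_e, all other edges unchanged. Then the Ricci–Foster curvatures satisfy K^G_e = K^H_{e₁} + K^H_{e₂}. -/

import Mathlib

open Finset

section RicciFoster

variable {V E : Type} [Fintype V] [Fintype E] [DecidableEq V] [DecidableEq E]

/-- One adjacency step: `a` and `b` are joined by an edge in `T`,
or identified by the relation `R`. -/
def stepRel (ends : E → V × V) (T : Finset E) (R : V → V → Prop) (a b : V) : Prop :=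
  (∃ e ∈ T, ends e = (a, b) ∨ ends e = (b, a)) ∨ R a b ∨ R b a

/-- The edge set `T`, together with the identifications `R`, connects all vertices. -/
def Connects (ends : E → V × V) (T : Finset E) (R : V → V → Prop) : Prop :=
  ∀ a b : V, Relation.ReflTransGen (stepRel ends T R) a b

/-- The (multi)graph with vertex set `V`, edge set `E` and endpoint map `ends` is connected. -/
def ConnectedG (ends : E → V × V) : Prop :=
  Connects ends Finset.univ (fun _ _ => False)

open scoped Classical in
/-- Weighted spanning-tree polynomial `τ(G; ℓ) = Σ_{spanning trees T} Π_{e ∉ T} ℓ_e`.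
A spanning tree is an edge set with `|V| - 1` edges connecting all vertices. -/
noncomputable def treePoly (ends : E → V × V) (ℓ : E → ℝ) : ℝ :=
  ∑ T ∈ Finset.univ.filter
      (fun T : Finset E => T.card + 1 = Fintype.card V ∧
        Connects ends T (fun _ _ => False)),
    ∏ e ∈ Tᶜ, ℓ e

open scoped Classical in
/-- Weighted spanning-tree polynomial `τ(G/xy; ℓ)` of the contraction `G/xy`:
spanning trees of `G/xy` are edge sets of `G` with `|V| - 2` edges which connect
all vertices once `x` and `y` are identified. -/
noncomputable def treePolyContract (ends : E → V × V) (x y : V) (ℓ : E → ℝ) : ℝ :=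
  ∑ T ∈ Finset.univ.filter
      (fun T : Finset E => T.card + 2 = Fintype.card V ∧
        Connects ends T (fun a b => a = x ∧ b = y)),
    ∏ e ∈ Tᶜ, ℓ e

/-- Effective resistance `ω_xy = τ(G/xy; ℓ) / τ(G; ℓ)`. -/
noncomputable def effRes (ends : E → V × V) (x y : V) (ℓ : E → ℝ) : ℝ :=
  treePolyContract ends x y ℓ / treePoly ends ℓ

/-- Degree of a vertex (a loop counts twice). -/
def degreeG (ends : E → V × V) (v : V) : ℕ :=
  ∑ e : E, ((if (ends e).1 = v then 1 else 0) + (if (ends e).2 = v then 1 else 0))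

/-- Ricci–Foster curvature `K_e = 1/deg u + 1/deg v − ω_uv/ℓ_e` of the edge `e = uv`. -/
noncomputable def curv (ends : E → V × V) (ℓ : E → ℝ) (e : E) : ℝ :=
  (degreeG ends (ends e).1 : ℝ)⁻¹ + (degreeG ends (ends e).2 : ℝ)⁻¹
    - effRes ends (ends e).1 (ends e).2 ℓ / ℓ e

/-- `ℓ : ℝ → E → ℝ` is a solution of the Ricci–Foster flow on `[0, T)`:
the resistances stay positive and `dℓ_e/dt = −K_e(ℓ(t))` for every edge `e`. -/
def IsRicciFlow (ends : E → V × V) (T : ℝ) (ℓ : ℝ → E → ℝ) : Prop :=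
  ∀ t ∈ Set.Ico (0 : ℝ) T,
    (∀ e, 0 < ℓ t e) ∧
    (∀ e, HasDerivWithinAt (fun s => ℓ s e) (-(curv ends (ℓ t) e)) (Set.Ico (0 : ℝ) T) t)

end RicciFoster

section Subdivision

variable {V E : Type} [Fintype V] [Fintype E] [DecidableEq V] [DecidableEq E]

open scoped Classical in
/-- Foster coefficient `F(e) = ℓ_e / (ℓ_e + ω_e(G∖e))`, where `ω_e(G∖e)` is the effective
resistance between the endpoints of `e` in the edge-deleted graph `G∖e`;
`F(e) = 0` when `e` is a bridge, i.e. when `G∖e` is disconnected. -/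
noncomputable def foster (ends : E → V × V) (ℓ : E → ℝ) (e0 : E) : ℝ :=
  if ConnectedG (fun f : {f : E // f ≠ e0} => ends f.1) then
    ℓ e0 / (ℓ e0 +
      effRes (fun f : {f : E // f ≠ e0} => ends f.1) (ends e0).1 (ends e0).2 (fun f => ℓ f.1))
  else 0

/-- The graph `H` obtained from `G` by subdividing the edge `e0 = uv` into two edges
`e₁ = u–x` and `e₂ = x–v` through a new vertex `x` (here `x = none`):
`e₁` is `Sum.inl e0` and `e₂` is `Sum.inr ()`. -/
def subdivEnds (ends : E → V × V) (e0 : E) : E ⊕ Unit → Option V × Option V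
  | Sum.inl f => if f = e0 then (some (ends e0).1, none) else (some (ends f).1, some (ends f).2)
  | Sum.inr _ => (none, some (ends e0).2)

/-- Resistances on the subdivided graph: `e₁` has length `a`, `e₂` has length `b`, and
all other edges keep their length. -/
noncomputable def subdivLen (ℓ : E → ℝ) (e0 : E) (a b : ℝ) : E ⊕ Unit → ℝ
  | Sum.inl f => if f = e0 then a else ℓ f
  | Sum.inr _ => b

end Subdivision

section Aux

variable {V E : Type}

/-- Reachability via `T`-edges and identifications `R`. -/
def reach (ends : E → V × V) (T : Finset E) (R : V → V → Prop) : V → V → Prop :=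
  Relation.ReflTransGen (stepRel ends T R)

lemma stepRel_symm {ends : E → V × V} {T : Finset E} {R : V → V → Prop} :
    Symmetric (stepRel ends T R) := by
  intro a b h
  rcases h with ⟨e, he, h | h⟩ | h | h
  · exact Or.inl ⟨e, he, Or.inr h⟩
  · exact Or.inl ⟨e, he, Or.inl h⟩
  · exact Or.inr (Or.inr h)
  · exact Or.inr (Or.inl h)

lemma reach_symm {ends : E → V × V} {T : Finset E} {R : V → V → Prop} :
    Symmetric (reach ends T R) :=
  by haveI : Std.Symm (stepRel ends T R) := ⟨stepRel_symm⟩; exact fun _ _ h => Std.Symm.symm (r := Relation.ReflTransGen (stepRel ends T R)) _ _ h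

/-- The setoid of connected components of `(T, R)`. -/
def reachSetoid (ends : E → V × V) (T : Finset E) (R : V → V → Prop) : Setoid V :=
  ⟨reach ends T R, fun _ => Relation.ReflTransGen.refl, fun h => reach_symm h,
    fun h h' => Relation.ReflTransGen.trans h h'⟩

lemma connects_iff_reach {ends : E → V × V} {T : Finset E} {R : V → V → Prop} :
    Connects ends T R ↔ ∀ a b, reach ends T R a b := Iff.rfl

/-- Coarsening of a setoid by identifying `x` and `y`. -/
def pairCoarse (s : Setoid V) (x y : V) : Setoid V where
  r a b := s.r a b ∨ (s.r a x ∧ s.r y b) ∨ (s.r a y ∧ s.r x b)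
  iseqv := by
    constructor
    · exact fun a => Or.inl (s.refl a)
    · rintro a b (h | ⟨h1, h2⟩ | ⟨h1, h2⟩)
      · exact Or.inl (s.symm h)
      · exact Or.inr (Or.inr ⟨s.symm h2, s.symm h1⟩)
      · exact Or.inr (Or.inl ⟨s.symm h2, s.symm h1⟩)
    · rintro a b c (h | ⟨h1, h2⟩ | ⟨h1, h2⟩) (g | ⟨g1, g2⟩ | ⟨g1, g2⟩)
      · exact Or.inl (s.trans h g)
      · exact Or.inr (Or.inl ⟨s.trans h g1, g2⟩)
      · exact Or.inr (Or.inr ⟨s.trans h g1, g2⟩)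
      · exact Or.inr (Or.inl ⟨h1, s.trans h2 g⟩)
      · exact Or.inr (Or.inl ⟨h1, g2⟩)
      · exact Or.inl (s.trans h1 g2)
      · exact Or.inr (Or.inr ⟨h1, s.trans h2 g⟩)
      · exact Or.inl (s.trans h1 g2)
      · exact Or.inr (Or.inr ⟨h1, g2⟩)

/-- Characterization of the reflexive-transitive closure of `s.r` augmented by the
pair `x ~ y`. -/
lemma rt_pair_iff (s : Setoid V) (x y p q : V) :
    Relation.ReflTransGen
        (fun a b => s.r a b ∨ (a = x ∧ b = y) ∨ (a = y ∧ b = x)) p q ↔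
      (pairCoarse s x y).r p q := by
  constructor
  · intro h
    induction h with
    | refl => exact Or.inl (s.refl p)
    | @tail b c _ hbc ih =>
      rcases hbc with hbc | ⟨hb, hc⟩ | ⟨hb, hc⟩
      on_goal 2 => rw [hb] at ih; rw [hc]
      on_goal 3 => rw [hb] at ih; rw [hc]
      · rcases ih with h | ⟨h1, h2⟩ | ⟨h1, h2⟩
        · exact Or.inl (s.trans h hbc)
        · exact Or.inr (Or.inl ⟨h1, s.trans h2 hbc⟩)
        · exact Or.inr (Or.inr ⟨h1, s.trans h2 hbc⟩)
      · rcases ih with h | ⟨h1, h2⟩ | ⟨h1, h2⟩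
        · exact Or.inr (Or.inl ⟨h, s.refl y⟩)
        · exact Or.inr (Or.inl ⟨h1, s.refl y⟩)
        · exact Or.inl h1
      · rcases ih with h | ⟨h1, h2⟩ | ⟨h1, h2⟩
        · exact Or.inr (Or.inr ⟨h, s.refl x⟩)
        · exact Or.inl h1
        · exact Or.inr (Or.inr ⟨h1, s.refl x⟩)
  · rintro (h | ⟨h1, h2⟩ | ⟨h1, h2⟩)
    · exact Relation.ReflTransGen.single (Or.inl h)
    · refine Relation.ReflTransGen.trans (Relation.ReflTransGen.single (Or.inl h1)) ?_
      refine Relation.ReflTransGen.trans (Relation.ReflTransGen.single ?_)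
        (Relation.ReflTransGen.single (Or.inl h2))
      exact Or.inr (Or.inl ⟨rfl, rfl⟩)
    · refine Relation.ReflTransGen.trans (Relation.ReflTransGen.single (Or.inl h1)) ?_
      refine Relation.ReflTransGen.trans (Relation.ReflTransGen.single ?_)
        (Relation.ReflTransGen.single (Or.inl h2))
      exact Or.inr (Or.inr ⟨rfl, rfl⟩)

end Aux
section Aux2

variable {V E : Type} [DecidableEq E]

lemma rt_le_rt {r p : V → V → Prop} (h : ∀ a b, r a b → Relation.ReflTransGen p a b)
    {a b : V} (hr : Relation.ReflTransGen r a b) : Relation.ReflTransGen p a b := by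
  induction hr with
  | refl => exact Relation.ReflTransGen.refl
  | tail _ hbc ih => exact ih.trans (h _ _ hbc)

lemma reachSetoid_insert (ends : E → V × V) (T : Finset E) (R : V → V → Prop) (e : E) :
    reachSetoid ends (insert e T) R
      = pairCoarse (reachSetoid ends T R) (ends e).1 (ends e).2 := by
  apply Setoid.ext
  intro p q
  constructor
  · intro h
    refine (rt_pair_iff (reachSetoid ends T R) (ends e).1 (ends e).2 p q).mp ?_
    refine rt_le_rt (fun a b hab => Relation.ReflTransGen.single ?_) h
    rcases hab with ⟨f, hf, hor⟩ | h | h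
    · rcases Finset.mem_insert.mp hf with rfl | hf
      · rcases hor with h | h
        · exact Or.inr (Or.inl ⟨by rw [h], by rw [h]⟩)
        · exact Or.inr (Or.inr ⟨by rw [h], by rw [h]⟩)
      · exact Or.inl (Relation.ReflTransGen.single (Or.inl ⟨f, hf, hor⟩))
    · exact Or.inl (Relation.ReflTransGen.single (Or.inr (Or.inl h)))
    · exact Or.inl (Relation.ReflTransGen.single (Or.inr (Or.inr h)))
  · intro h
    have h' := (rt_pair_iff (reachSetoid ends T R) (ends e).1 (ends e).2 p q).mpr h
    refine rt_le_rt (fun a b hab => ?_) h'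
    rcases hab with hab | ⟨ha, hb⟩ | ⟨ha, hb⟩
    · exact rt_le_rt (fun c d hcd => Relation.ReflTransGen.single (by
        rcases hcd with ⟨f, hf, hor⟩ | h | h
        · exact Or.inl ⟨f, Finset.mem_insert_of_mem hf, hor⟩
        · exact Or.inr (Or.inl h)
        · exact Or.inr (Or.inr h))) hab
    · exact Relation.ReflTransGen.single
        (Or.inl ⟨e, Finset.mem_insert_self e T, Or.inl (by rw [ha, hb])⟩)
    · exact Relation.ReflTransGen.single
        (Or.inl ⟨e, Finset.mem_insert_self e T, Or.inr (by rw [ha, hb])⟩)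

lemma reachSetoid_pairR (ends : E → V × V) (T : Finset E) (x y : V) :
    reachSetoid ends T (fun a b => a = x ∧ b = y)
      = pairCoarse (reachSetoid ends T (fun _ _ => False)) x y := by
  apply Setoid.ext
  intro p q
  constructor
  · intro h
    refine (rt_pair_iff _ x y p q).mp ?_
    refine rt_le_rt (fun a b hab => Relation.ReflTransGen.single ?_) h
    rcases hab with ⟨f, hf, hor⟩ | ⟨rfl, rfl⟩ | ⟨rfl, rfl⟩
    · exact Or.inl (Relation.ReflTransGen.single (Or.inl ⟨f, hf, hor⟩))
    · exact Or.inr (Or.inl ⟨rfl, rfl⟩)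
    · exact Or.inr (Or.inr ⟨rfl, rfl⟩)
  · intro h
    have h' := (rt_pair_iff _ x y p q).mpr h
    refine rt_le_rt (fun a b hab => ?_) h'
    rcases hab with hab | ⟨rfl, rfl⟩ | ⟨rfl, rfl⟩
    · exact rt_le_rt (fun c d hcd => Relation.ReflTransGen.single (by
        rcases hcd with ⟨f, hf, hor⟩ | h | h
        · exact Or.inl ⟨f, hf, hor⟩
        · exact h.elim
        · exact h.elim)) hab
    · exact Relation.ReflTransGen.single (Or.inr (Or.inl ⟨rfl, rfl⟩))
    · exact Relation.ReflTransGen.single (Or.inr (Or.inr ⟨rfl, rfl⟩))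

/-- The canonical surjection from `Quotient s` to the pair-coarsened quotient. -/
def coarseMap (s : Setoid V) (x y : V) :
    Quotient s → Quotient (pairCoarse s x y) :=
  Quotient.map' id (fun a b h => Or.inl h)

lemma coarseMap_surj (s : Setoid V) (x y : V) : Function.Surjective (coarseMap s x y) := by
  intro q
  induction q using Quotient.inductionOn with
  | h a => exact ⟨Quotient.mk s a, rfl⟩

lemma coarseMap_eq (s : Setoid V) (x y : V) {z w : Quotient s}
    (h : coarseMap s x y z = coarseMap s x y w) :
    z = w ∨ (z = Quotient.mk s x ∧ w = Quotient.mk s y)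
      ∨ (z = Quotient.mk s y ∧ w = Quotient.mk s x) := by
  induction z using Quotient.inductionOn with
  | h a =>
  induction w using Quotient.inductionOn with
  | h b =>
  have hab : (pairCoarse s x y).r a b := Quotient.exact h
  rcases hab with hab | ⟨h1, h2⟩ | ⟨h1, h2⟩
  · exact Or.inl (Quotient.sound hab)
  · exact Or.inr (Or.inl ⟨Quotient.sound h1, Quotient.sound (s.symm h2)⟩)
  · exact Or.inr (Or.inr ⟨Quotient.sound h1, Quotient.sound (s.symm h2)⟩)

lemma card_subtype_ne_add_one {α : Type} [Finite α] (c : α) :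
    Nat.card {z : α // z ≠ c} + 1 = Nat.card α := by
  classical
  rw [← Nat.card_congr (Equiv.optionSubtypeNe c), Finite.card_option]

section Cards
variable [Finite V]

lemma card_pairCoarse_le (s : Setoid V) (x y : V) :
    Nat.card (Quotient s) ≤ Nat.card (Quotient (pairCoarse s x y)) + 1 := by
  haveI : Finite (Quotient s) := Quotient.finite s
  haveI : Finite (Quotient (pairCoarse s x y)) := Quotient.finite _
  have hinj : Function.Injective
      (fun z : {z : Quotient s // z ≠ Quotient.mk s y} => coarseMap s x y z.1) := by
    rintro ⟨z, hz⟩ ⟨w, hw⟩ h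
    rcases coarseMap_eq s x y h with h | ⟨h1, h2⟩ | ⟨h1, h2⟩
    · exact Subtype.ext h
    · exact absurd h2 hw
    · exact absurd h1 hz
  have h2 := Nat.card_le_card_of_injective _ hinj
  have h1 := card_subtype_ne_add_one (Quotient.mk s y)
  omega

lemma card_pairCoarse_lt (s : Setoid V) (x y : V) (h : ¬ s.r x y) :
    Nat.card (Quotient (pairCoarse s x y)) < Nat.card (Quotient s) := by
  haveI : Finite (Quotient s) := Quotient.finite s
  haveI : Finite (Quotient (pairCoarse s x y)) := Quotient.finite _
  have hxy : (Quotient.mk s x : Quotient s) ≠ Quotient.mk s y :=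
    fun hc => h (Quotient.exact hc)
  have hsurj : Function.Surjective
      (fun z : {z : Quotient s // z ≠ Quotient.mk s y} => coarseMap s x y z.1) := by
    intro q
    obtain ⟨z, rfl⟩ := coarseMap_surj s x y q
    by_cases hz : z = Quotient.mk s y
    · refine ⟨⟨Quotient.mk s x, hxy⟩, ?_⟩
      subst hz
      exact Quotient.sound (Or.inr (Or.inl ⟨s.refl x, s.refl y⟩))
    · exact ⟨⟨z, hz⟩, rfl⟩
  have h2 := Nat.card_le_card_of_surjective _ hsurj
  have h1 := card_subtype_ne_add_one (Quotient.mk s y)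
  haveI : Nonempty (Quotient s) := ⟨Quotient.mk s y⟩
  have h3 : 0 < Nat.card (Quotient s) := Nat.card_pos (α := Quotient s)
  omega

end Cards
end Aux2
section Aux3
set_option linter.unusedSectionVars false

variable {V E : Type} [Fintype V] [Fintype E] [DecidableEq V] [DecidableEq E]

lemma reach_empty_bot (ends : E → V × V) {a b : V} :
    reach ends ∅ (fun _ _ => False) a b ↔ a = b := by
  constructor
  · intro h
    induction h with
    | refl => rfl
    | tail _ hbc ih =>
      rcases hbc with ⟨f, hf, _⟩ | h | h
      · exact absurd hf (Finset.notMem_empty f)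
      · exact h.elim
      · exact h.elim
  · rintro rfl; exact Relation.ReflTransGen.refl

lemma card_quot_empty_bot (ends : E → V × V) :
    Nat.card (Quotient (reachSetoid ends ∅ (fun _ _ => False))) = Fintype.card V := by
  rw [← Nat.card_eq_fintype_card]
  refine Nat.card_congr ⟨Quotient.lift id (fun a b h => (reach_empty_bot ends).mp h),
    Quotient.mk _, ?_, ?_⟩
  · intro q
    induction q using Quotient.inductionOn with
    | h a => rfl
  · intro a; rfl

lemma connects_iff_card_le_one (ends : E → V × V) (T : Finset E) (R : V → V → Prop) :
    Connects ends T R ↔ Nat.card (Quotient (reachSetoid ends T R)) ≤ 1 := by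
  haveI : Finite (Quotient (reachSetoid ends T R)) := Quotient.finite _
  rw [Finite.card_le_one_iff_subsingleton]
  constructor
  · intro h
    constructor
    intro z w
    induction z using Quotient.inductionOn with
    | h a =>
    induction w using Quotient.inductionOn with
    | h b => exact Quotient.sound (h a b)
  · intro h a b
    exact Quotient.exact (Subsingleton.elim (Quotient.mk (reachSetoid ends T R) a) (Quotient.mk (reachSetoid ends T R) b))

lemma card_reach_le (ends : E → V × V) (R : V → V → Prop) (T : Finset E) :
    Nat.card (Quotient (reachSetoid ends ∅ R))
      ≤ Nat.card (Quotient (reachSetoid ends T R)) + T.card := by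
  induction T using Finset.induction_on with
  | empty => simp
  | @insert e T he ih =>
    rw [reachSetoid_insert, Finset.card_insert_of_notMem he]
    have := card_pairCoarse_le (reachSetoid ends T R) (ends e).1 (ends e).2
    omega

lemma exists_crossing (ends : E → V × V) (T : Finset E) {a b : V}
    (h : Relation.ReflTransGen (stepRel ends Finset.univ (fun _ _ => False)) a b) :
    reach ends T (fun _ _ => False) a b ∨
      ∃ x y, stepRel ends Finset.univ (fun _ _ => False) x y ∧
        ¬ reach ends T (fun _ _ => False) x y := by
  induction h with
  | refl => exact Or.inl Relation.ReflTransGen.refl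
  | @tail p q _ hpq ih =>
    rcases ih with ih | ih
    · by_cases hr : reach ends T (fun _ _ => False) p q
      · exact Or.inl (ih.trans hr)
      · exact Or.inr ⟨p, q, hpq, hr⟩
    · exact Or.inr ih

lemma exists_spanning_tree (ends : E → V × V) (hV : Nonempty V)
    (hG : Connects ends Finset.univ (fun _ _ => False)) :
    ∃ T : Finset E, T.card + 1 = Fintype.card V ∧ Connects ends T (fun _ _ => False) := by
  have main : ∀ n : ℕ, ∀ T : Finset E,
      Nat.card (Quotient (reachSetoid ends T (fun _ _ => False))) ≤ n →
      Nat.card (Quotient (reachSetoid ends T (fun _ _ => False))) + T.card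
        ≤ Fintype.card V →
      ∃ T' : Finset E, T'.card + 1 = Fintype.card V ∧
        Connects ends T' (fun _ _ => False) := by
    intro n
    induction n with
    | zero =>
      intro T hc _
      haveI : Finite (Quotient (reachSetoid ends T (fun _ _ => False))) := Quotient.finite _
      haveI : Nonempty (Quotient (reachSetoid ends T (fun _ _ => False))) :=
        ⟨Quotient.mk _ hV.some⟩
      have := Nat.card_pos (α := Quotient (reachSetoid ends T (fun _ _ => False)))
      omega
    | succ n ih =>
      intro T hc hinv
      haveI : Finite (Quotient (reachSetoid ends T (fun _ _ => False))) := Quotient.finite _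
      haveI : Nonempty (Quotient (reachSetoid ends T (fun _ _ => False))) :=
        ⟨Quotient.mk _ hV.some⟩
      by_cases hone : Nat.card (Quotient (reachSetoid ends T (fun _ _ => False))) ≤ 1
      · refine ⟨T, ?_, (connects_iff_card_le_one ends T _).mpr hone⟩
        have hLB := card_reach_le ends (fun _ _ => False) T
        rw [card_quot_empty_bot ends] at hLB
        have := Nat.card_pos (α := Quotient (reachSetoid ends T (fun _ _ => False)))
        omega
      · have hnt : Nontrivial (Quotient (reachSetoid ends T (fun _ _ => False))) := by
          rw [← Finite.one_lt_card_iff_nontrivial]; omega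
        obtain ⟨z, w, hzw⟩ := hnt
        obtain ⟨p, rfl⟩ := Quotient.exists_rep z
        obtain ⟨q, rfl⟩ := Quotient.exists_rep w
        have hnr : ¬ reach ends T (fun _ _ => False) p q :=
          fun hr => hzw (Quotient.sound hr)
        rcases exists_crossing ends T (hG p q) with hr | ⟨x, y, hstep, hnxy⟩
        · exact absurd hr hnr
        · rcases hstep with ⟨e, _, hor⟩ | h | h
          rotate_left
          · exact h.elim
          · exact h.elim
          have heT : e ∉ T := by
            intro heT
            exact hnxy (Relation.ReflTransGen.single (Or.inl ⟨e, heT, hor⟩))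
          have hlt : Nat.card (Quotient (reachSetoid ends (insert e T) (fun _ _ => False)))
              < Nat.card (Quotient (reachSetoid ends T (fun _ _ => False))) := by
            rw [reachSetoid_insert]
            refine card_pairCoarse_lt _ _ _ ?_
            intro hr
            rcases hor with h | h
            · rw [h] at hr; exact hnxy hr
            · rw [h] at hr; exact hnxy (reach_symm hr)
          refine ih (insert e T) (by omega) ?_
          rw [Finset.card_insert_of_notMem heT]
          omega
  refine main (Nat.card (Quotient (reachSetoid ends ∅ (fun _ _ => False)))) ∅ le_rfl ?_
  rw [card_quot_empty_bot ends]
  simp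

end Aux3
section Aux4
set_option linter.unusedSectionVars false

variable {V E : Type} [Fintype V] [Fintype E] [DecidableEq V] [DecidableEq E]

lemma card_quot_empty_le_of_connects {ends : E → V × V} {T : Finset E} {R : V → V → Prop}
    (hC : Connects ends T R) :
    Nat.card (Quotient (reachSetoid ends ∅ R)) ≤ T.card + 1 := by
  have h1 := card_reach_le ends R T
  have h2 := (connects_iff_card_le_one ends T R).mp hC
  omega

lemma card_quot_pair_ge (ends : E → V × V) (x y : V) :
    Fintype.card V ≤
      Nat.card (Quotient (reachSetoid ends ∅ (fun a b => a = x ∧ b = y))) + 1 := by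
  rw [reachSetoid_pairR, ← card_quot_empty_bot ends]
  exact card_pairCoarse_le _ x y

lemma connects_erase_of_reach {ends : E → V × V} {T : Finset E} {R : V → V → Prop} {e : E}
    (hre : reach ends (T.erase e) R (ends e).1 (ends e).2)
    (hC : Connects ends T R) : Connects ends (T.erase e) R := by
  intro a b
  refine rt_le_rt (fun c d hcd => ?_) (hC a b)
  rcases hcd with ⟨f, hf, hor⟩ | h | h
  · by_cases hfe : f = e
    · subst hfe
      rcases hor with h | h
      · rw [h] at hre; exact hre
      · rw [h] at hre; exact reach_symm hre
    · exact Relation.ReflTransGen.single (Or.inl ⟨f, Finset.mem_erase.mpr ⟨hfe, hf⟩, hor⟩)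
  · exact Relation.ReflTransGen.single (Or.inr (Or.inl h))
  · exact Relation.ReflTransGen.single (Or.inr (Or.inr h))

/-- An edge whose endpoints are identified by the contraction cannot belong to a
spanning tree of the contraction. -/
lemma contract_tree_not_mem {ends : E → V × V} {x y : V} {e : E}
    (hends : ends e = (x, y)) {T : Finset E}
    (hcard : T.card + 2 = Fintype.card V)
    (hC : Connects ends T (fun a b => a = x ∧ b = y)) : e ∉ T := by
  intro heT
  have hre : reach ends (T.erase e) (fun a b => a = x ∧ b = y) (ends e).1 (ends e).2 := by
    refine Relation.ReflTransGen.single (Or.inr (Or.inl ?_))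
    rw [hends]
    exact ⟨rfl, rfl⟩
  have hC' := connects_erase_of_reach hre hC
  have h1 := card_quot_empty_le_of_connects hC'
  have h2 := card_quot_pair_ge ends x y
  have h3 : (T.erase e).card = T.card - 1 := Finset.card_erase_of_mem heT
  have h4 : 1 ≤ T.card := Finset.card_pos.mpr ⟨e, heT⟩
  omega

lemma connects_contract_of_connects {ends : E → V × V} {T : Finset E} {x y : V} {e : E}
    (hends : ends e = (x, y)) (hC : Connects ends T (fun _ _ => False)) :
    Connects ends (T.erase e) (fun a b => a = x ∧ b = y) := by
  intro a b
  refine rt_le_rt (fun c d hcd => ?_) (hC a b)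
  rcases hcd with ⟨f, hf, hor⟩ | h | h
  · by_cases hfe : f = e
    · subst hfe
      rw [hends] at hor
      rcases hor with h | h
      · obtain ⟨hx, hy⟩ := Prod.mk.injEq .. ▸ h
        exact Relation.ReflTransGen.single (Or.inr (Or.inl ⟨hx.symm, hy.symm⟩))
      · obtain ⟨hx, hy⟩ := Prod.mk.injEq .. ▸ h
        exact Relation.ReflTransGen.single (Or.inr (Or.inr ⟨hx.symm, hy.symm⟩))
    · exact Relation.ReflTransGen.single (Or.inl ⟨f, Finset.mem_erase.mpr ⟨hfe, hf⟩, hor⟩)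
  · exact h.elim
  · exact h.elim

lemma connects_of_contract {ends : E → V × V} {T : Finset E} {x y : V} {e : E}
    (hends : ends e = (x, y)) (heT : e ∈ T)
    (hC : Connects ends (T.erase e) (fun a b => a = x ∧ b = y)) :
    Connects ends T (fun _ _ => False) := by
  intro a b
  refine rt_le_rt (fun c d hcd => ?_) (hC a b)
  rcases hcd with ⟨f, hf, hor⟩ | ⟨rfl, rfl⟩ | ⟨rfl, rfl⟩
  · exact Relation.ReflTransGen.single (Or.inl ⟨f, (Finset.mem_erase.mp hf).2, hor⟩)
  · exact Relation.ReflTransGen.single (Or.inl ⟨e, heT, Or.inl hends⟩)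
  · exact Relation.ReflTransGen.single (Or.inl ⟨e, heT, Or.inr hends⟩)

/-- Transfer of connectivity along a vertex map. -/
lemma connects_map {V₁ E₁ V₂ E₂ : Type}
    {ends₁ : E₁ → V₁ × V₁} {S₁ : Finset E₁} {R₁ : V₁ → V₁ → Prop}
    {ends₂ : E₂ → V₂ × V₂} {S₂ : Finset E₂} {R₂ : V₂ → V₂ → Prop}
    (π : V₁ → V₂)
    (hcover : ∀ w : V₂, ∃ v : V₁, Relation.ReflTransGen (stepRel ends₂ S₂ R₂) w (π v))
    (hstep : ∀ a b, stepRel ends₁ S₁ R₁ a b →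
      Relation.ReflTransGen (stepRel ends₂ S₂ R₂) (π a) (π b))
    (hC : Connects ends₁ S₁ R₁) : Connects ends₂ S₂ R₂ := by
  intro a b
  obtain ⟨va, hva⟩ := hcover a
  obtain ⟨vb, hvb⟩ := hcover b
  have hmid : Relation.ReflTransGen (stepRel ends₂ S₂ R₂) (π va) (π vb) := by
    have h := hC va vb
    clear hva hvb
    induction h with
    | refl => exact Relation.ReflTransGen.refl
    | tail _ hbc ih => exact ih.trans (hstep _ _ hbc)
  exact (hva.trans hmid).trans (reach_symm hvb)

end Aux4
section Aux5
set_option linter.unusedSectionVars false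

variable {V E : Type} [Fintype V] [Fintype E] [DecidableEq V] [DecidableEq E]
variable (ends : E → V × V) (e0 : E)

lemma subdivEnds_inl_e0 :
    subdivEnds ends e0 (Sum.inl e0) = (some (ends e0).1, none) := by simp [subdivEnds]

lemma subdivEnds_inl_ne {f : E} (h : f ≠ e0) :
    subdivEnds ends e0 (Sum.inl f) = (some (ends f).1, some (ends f).2) := by
  simp [subdivEnds, h]

lemma subdivEnds_inr : subdivEnds ends e0 (Sum.inr ()) = (none, some (ends e0).2) := rfl

/-- Reachability step through an ordinary edge `f ∈ T`, lifted to the subdivision. -/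
lemma lift_edge_step {T : Finset E} (he0 : e0 ∉ T) {S : Finset (E ⊕ Unit)}
    (hsub : ∀ f ∈ T, Sum.inl f ∈ S) {R' : Option V → Option V → Prop}
    {f : E} (hf : f ∈ T) {a b : V} (hor : ends f = (a, b) ∨ ends f = (b, a)) :
    Relation.ReflTransGen (stepRel (subdivEnds ends e0) S R') (some a) (some b) := by
  have hne : f ≠ e0 := fun h => he0 (h ▸ hf)
  refine Relation.ReflTransGen.single (Or.inl ⟨Sum.inl f, hsub f hf, ?_⟩)
  rw [subdivEnds_inl_ne ends e0 hne]
  rcases hor with h | h <;> rw [h]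
  · exact Or.inl rfl
  · exact Or.inr rfl

/-- Projection of a single subdivision step to the base graph, generic version:
each edge/identification of the subdivided graph maps to reachability in `G`. -/
lemma proj_edge_step {T : Finset E} (he0 : e0 ∉ T) {R : V → V → Prop} (π : Option V → V)
    (hπ : ∀ z : V, π (some z) = z)
    {f : E} (hf : f ∈ T) {a b : Option V}
    (hor : subdivEnds ends e0 (Sum.inl f) = (a, b) ∨ subdivEnds ends e0 (Sum.inl f) = (b, a)) :
    Relation.ReflTransGen (stepRel ends T R) (π a) (π b) := by
  have hne : f ≠ e0 := fun h => he0 (h ▸ hf)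
  rw [subdivEnds_inl_ne ends e0 hne] at hor
  rcases hor with h | h <;>
    rw [Prod.mk.injEq] at h <;> obtain ⟨h1, h2⟩ := h
  · rw [← h1, ← h2, hπ, hπ]
    exact Relation.ReflTransGen.single (Or.inl ⟨f, hf, Or.inl rfl⟩)
  · rw [← h1, ← h2, hπ, hπ]
    exact Relation.ReflTransGen.single (Or.inl ⟨f, hf, Or.inr rfl⟩)

end Aux5
section Aux6
set_option linter.unusedSectionVars false

variable {V E : Type} [Fintype V] [Fintype E] [DecidableEq V] [DecidableEq E]
variable (ends : E → V × V) (e0 : E)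

/-- `S1 = {e₁, e₂} ∪ T`: spanning sets of `H` containing both halves of the
subdivided edge correspond to spanning sets of `G/uv`. -/
lemma connects_S1_iff {T : Finset E} (he0 : e0 ∉ T) :
    Connects (subdivEnds ends e0)
        (insert (Sum.inl e0) (insert (Sum.inr ()) (T.image Sum.inl))) (fun _ _ => False)
      ↔ Connects ends T (fun a b => a = (ends e0).1 ∧ b = (ends e0).2) := by
  constructor
  · intro hC
    refine connects_map (fun w : Option V => w.getD (ends e0).1) ?_ ?_ hC
    · exact fun w => ⟨some w, Relation.ReflTransGen.refl⟩
    rintro a b (⟨g, hg, hor⟩ | h | h)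
    rotate_left
    · exact h.elim
    · exact h.elim
    simp only [Finset.mem_insert, Finset.mem_image] at hg
    rcases hg with rfl | rfl | ⟨f, hf, rfl⟩
    · rw [subdivEnds_inl_e0] at hor
      rcases hor with h | h <;> rw [Prod.mk.injEq] at h <;> obtain ⟨h1, h2⟩ := h <;>
        rw [← h1, ← h2] <;> exact Relation.ReflTransGen.refl
    · rw [subdivEnds_inr] at hor
      rcases hor with h | h <;> rw [Prod.mk.injEq] at h <;> obtain ⟨h1, h2⟩ := h <;>
        rw [← h1, ← h2]
      · exact Relation.ReflTransGen.single (Or.inr (Or.inl ⟨rfl, rfl⟩))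
      · exact Relation.ReflTransGen.single (Or.inr (Or.inr ⟨rfl, rfl⟩))
    · exact proj_edge_step ends e0 he0 (fun w => w.getD (ends e0).1) (fun _ => rfl) hf hor
  · intro hC
    have he1 : (Sum.inl e0 : E ⊕ Unit) ∈
        insert (Sum.inl e0) (insert (Sum.inr ()) (T.image Sum.inl)) :=
      Finset.mem_insert_self _ _
    have he2 : (Sum.inr () : E ⊕ Unit) ∈
        insert (Sum.inl e0) (insert (Sum.inr ()) (T.image Sum.inl)) :=
      Finset.mem_insert_of_mem (Finset.mem_insert_self _ _)
    refine connects_map (some : V → Option V) ?_ ?_ hC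
    · intro w
      cases w with
      | none => exact ⟨(ends e0).1, Relation.ReflTransGen.single
          (Or.inl ⟨Sum.inl e0, he1, Or.inr (subdivEnds_inl_e0 ends e0)⟩)⟩
      | some z => exact ⟨z, Relation.ReflTransGen.refl⟩
    · rintro a b (⟨f, hf, hor⟩ | ⟨rfl, rfl⟩ | ⟨rfl, rfl⟩)
      · exact lift_edge_step ends e0 he0
          (fun f hf => Finset.mem_insert_of_mem
            (Finset.mem_insert_of_mem (Finset.mem_image_of_mem _ hf))) hf hor
      · refine Relation.ReflTransGen.trans (b := (none : Option V)) ?_ ?_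
        · exact Relation.ReflTransGen.single
            (Or.inl ⟨Sum.inl e0, he1, Or.inl (subdivEnds_inl_e0 ends e0)⟩)
        · exact Relation.ReflTransGen.single
            (Or.inl ⟨Sum.inr (), he2, Or.inl (subdivEnds_inr ends e0)⟩)
      · refine Relation.ReflTransGen.trans (b := (none : Option V)) ?_ ?_
        · exact Relation.ReflTransGen.single
            (Or.inl ⟨Sum.inr (), he2, Or.inr (subdivEnds_inr ends e0)⟩)
        · exact Relation.ReflTransGen.single
            (Or.inl ⟨Sum.inl e0, he1, Or.inr (subdivEnds_inl_e0 ends e0)⟩)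
end Aux6

section Aux6b
set_option linter.unusedSectionVars false

variable {V E : Type} [Fintype V] [Fintype E] [DecidableEq V] [DecidableEq E]
variable (ends : E → V × V) (e0 : E)

/-- `S2 = {e₁} ∪ T`. -/
lemma connects_S2_iff {T : Finset E} (he0 : e0 ∉ T) :
    Connects (subdivEnds ends e0)
        (insert (Sum.inl e0) (T.image Sum.inl)) (fun _ _ => False)
      ↔ Connects ends T (fun _ _ => False) := by
  constructor
  · intro hC
    refine connects_map (fun w : Option V => w.getD (ends e0).1) ?_ ?_ hC
    · exact fun w => ⟨some w, Relation.ReflTransGen.refl⟩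
    rintro a b (⟨g, hg, hor⟩ | h | h)
    rotate_left
    · exact h.elim
    · exact h.elim
    simp only [Finset.mem_insert, Finset.mem_image] at hg
    rcases hg with rfl | ⟨f, hf, rfl⟩
    · rw [subdivEnds_inl_e0] at hor
      rcases hor with h | h <;> rw [Prod.mk.injEq] at h <;> obtain ⟨h1, h2⟩ := h <;>
        rw [← h1, ← h2] <;> exact Relation.ReflTransGen.refl
    · exact proj_edge_step ends e0 he0 (fun w => w.getD (ends e0).1) (fun _ => rfl) hf hor
  · intro hC
    have he1 : (Sum.inl e0 : E ⊕ Unit) ∈ insert (Sum.inl e0) (T.image Sum.inl) :=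
      Finset.mem_insert_self _ _
    refine connects_map (some : V → Option V) ?_ ?_ hC
    · intro w
      cases w with
      | none => exact ⟨(ends e0).1, Relation.ReflTransGen.single
          (Or.inl ⟨Sum.inl e0, he1, Or.inr (subdivEnds_inl_e0 ends e0)⟩)⟩
      | some z => exact ⟨z, Relation.ReflTransGen.refl⟩
    · rintro a b (⟨f, hf, hor⟩ | h | h)
      rotate_left
      · exact h.elim
      · exact h.elim
      exact lift_edge_step ends e0 he0
        (fun f hf => Finset.mem_insert_of_mem (Finset.mem_image_of_mem _ hf)) hf hor

/-- `S3 = {e₂} ∪ T` with no identifications. -/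
lemma connects_S3_iff {T : Finset E} (he0 : e0 ∉ T) :
    Connects (subdivEnds ends e0)
        (insert (Sum.inr ()) (T.image Sum.inl)) (fun _ _ => False)
      ↔ Connects ends T (fun _ _ => False) := by
  constructor
  · intro hC
    refine connects_map (fun w : Option V => w.getD (ends e0).2) ?_ ?_ hC
    · exact fun w => ⟨some w, Relation.ReflTransGen.refl⟩
    rintro a b (⟨g, hg, hor⟩ | h | h)
    rotate_left
    · exact h.elim
    · exact h.elim
    simp only [Finset.mem_insert, Finset.mem_image] at hg
    rcases hg with rfl | ⟨f, hf, rfl⟩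
    · rw [subdivEnds_inr] at hor
      rcases hor with h | h <;> rw [Prod.mk.injEq] at h <;> obtain ⟨h1, h2⟩ := h <;>
        rw [← h1, ← h2] <;> exact Relation.ReflTransGen.refl
    · exact proj_edge_step ends e0 he0 (fun w => w.getD (ends e0).2) (fun _ => rfl) hf hor
  · intro hC
    have he2 : (Sum.inr () : E ⊕ Unit) ∈ insert (Sum.inr ()) (T.image Sum.inl) :=
      Finset.mem_insert_self _ _
    refine connects_map (some : V → Option V) ?_ ?_ hC
    · intro w
      cases w with
      | none => exact ⟨(ends e0).2, Relation.ReflTransGen.single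
          (Or.inl ⟨Sum.inr (), he2, Or.inl (subdivEnds_inr ends e0)⟩)⟩
      | some z => exact ⟨z, Relation.ReflTransGen.refl⟩
    · rintro a b (⟨f, hf, hor⟩ | h | h)
      rotate_left
      · exact h.elim
      · exact h.elim
      exact lift_edge_step ends e0 he0
        (fun f hf => Finset.mem_insert_of_mem (Finset.mem_image_of_mem _ hf)) hf hor

/-- `S4 = T` alone never connects the subdivided graph. -/
lemma not_connects_S4 (hV : Nonempty V) {T : Finset E} (he0 : e0 ∉ T) :
    ¬ Connects (subdivEnds ends e0) (T.image Sum.inl) (fun _ _ => False) := by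
  intro hC
  have hstepn : ∀ c, ¬ stepRel (subdivEnds ends e0) (T.image Sum.inl)
      (fun _ _ => False) none c := by
    rintro c (⟨g, hg, hor⟩ | h | h)
    rotate_left
    · exact h
    · exact h
    simp only [Finset.mem_image] at hg
    obtain ⟨f, hf, rfl⟩ := hg
    have hne : f ≠ e0 := fun h => he0 (h ▸ hf)
    rw [subdivEnds_inl_ne ends e0 hne] at hor
    rcases hor with h | h <;> rw [Prod.mk.injEq] at h
    · exact Option.some_ne_none _ h.1
    · exact Option.some_ne_none _ h.2
  have key : ∀ b : Option V, Relation.ReflTransGen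
      (stepRel (subdivEnds ends e0) (T.image Sum.inl) (fun _ _ => False)) none b →
      b = none := by
    intro b h
    induction h with
    | refl => rfl
    | tail _ hbc ih =>
      subst ih
      exact absurd hbc (hstepn _)
  exact Option.some_ne_none _ (key (some hV.some) (hC none (some hV.some)))

/-- `S3` with `u ~ x`: connects iff `T` connects `G/uv`. -/
lemma connects_S3_R1_iff {T : Finset E} (he0 : e0 ∉ T) :
    Connects (subdivEnds ends e0) (insert (Sum.inr ()) (T.image Sum.inl))
        (fun a b => a = some (ends e0).1 ∧ b = none)
      ↔ Connects ends T (fun a b => a = (ends e0).1 ∧ b = (ends e0).2) := by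
  constructor
  · intro hC
    refine connects_map (fun w : Option V => w.getD (ends e0).1) ?_ ?_ hC
    · exact fun w => ⟨some w, Relation.ReflTransGen.refl⟩
    rintro a b (⟨g, hg, hor⟩ | ⟨rfl, rfl⟩ | ⟨rfl, rfl⟩)
    rotate_left
    · exact Relation.ReflTransGen.refl
    · exact Relation.ReflTransGen.refl
    simp only [Finset.mem_insert, Finset.mem_image] at hg
    rcases hg with rfl | ⟨f, hf, rfl⟩
    · rw [subdivEnds_inr] at hor
      rcases hor with h | h <;> rw [Prod.mk.injEq] at h <;> obtain ⟨h1, h2⟩ := h <;>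
        rw [← h1, ← h2]
      · exact Relation.ReflTransGen.single (Or.inr (Or.inl ⟨rfl, rfl⟩))
      · exact Relation.ReflTransGen.single (Or.inr (Or.inr ⟨rfl, rfl⟩))
    · exact proj_edge_step ends e0 he0 (fun w => w.getD (ends e0).1) (fun _ => rfl) hf hor
  · intro hC
    have he2 : (Sum.inr () : E ⊕ Unit) ∈ insert (Sum.inr ()) (T.image Sum.inl) :=
      Finset.mem_insert_self _ _
    refine connects_map (some : V → Option V) ?_ ?_ hC
    · intro w
      cases w with
      | none => exact ⟨(ends e0).1,
          Relation.ReflTransGen.single (Or.inr (Or.inr ⟨rfl, rfl⟩))⟩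
      | some z => exact ⟨z, Relation.ReflTransGen.refl⟩
    · rintro a b (⟨f, hf, hor⟩ | ⟨rfl, rfl⟩ | ⟨rfl, rfl⟩)
      · exact lift_edge_step ends e0 he0
          (fun f hf => Finset.mem_insert_of_mem (Finset.mem_image_of_mem _ hf)) hf hor
      · refine Relation.ReflTransGen.trans (b := (none : Option V)) ?_ ?_
        · exact Relation.ReflTransGen.single (Or.inr (Or.inl ⟨rfl, rfl⟩))
        · exact Relation.ReflTransGen.single
            (Or.inl ⟨Sum.inr (), he2, Or.inl (subdivEnds_inr ends e0)⟩)
      · refine Relation.ReflTransGen.trans (b := (none : Option V)) ?_ ?_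
        · exact Relation.ReflTransGen.single
            (Or.inl ⟨Sum.inr (), he2, Or.inr (subdivEnds_inr ends e0)⟩)
        · exact Relation.ReflTransGen.single (Or.inr (Or.inr ⟨rfl, rfl⟩))

/-- `S4` with `u ~ x`: connects iff `T` connects `G`. -/
lemma connects_S4_R1_iff {T : Finset E} (he0 : e0 ∉ T) :
    Connects (subdivEnds ends e0) (T.image Sum.inl)
        (fun a b => a = some (ends e0).1 ∧ b = none)
      ↔ Connects ends T (fun _ _ => False) := by
  constructor
  · intro hC
    refine connects_map (fun w : Option V => w.getD (ends e0).1) ?_ ?_ hC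
    · exact fun w => ⟨some w, Relation.ReflTransGen.refl⟩
    rintro a b (⟨g, hg, hor⟩ | ⟨rfl, rfl⟩ | ⟨rfl, rfl⟩)
    rotate_left
    · exact Relation.ReflTransGen.refl
    · exact Relation.ReflTransGen.refl
    simp only [Finset.mem_image] at hg
    obtain ⟨f, hf, rfl⟩ := hg
    exact proj_edge_step ends e0 he0 (fun w => w.getD (ends e0).1) (fun _ => rfl) hf hor
  · intro hC
    refine connects_map (some : V → Option V) ?_ ?_ hC
    · intro w
      cases w with
      | none => exact ⟨(ends e0).1,
          Relation.ReflTransGen.single (Or.inr (Or.inr ⟨rfl, rfl⟩))⟩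
      | some z => exact ⟨z, Relation.ReflTransGen.refl⟩
    · rintro a b (⟨f, hf, hor⟩ | h | h)
      rotate_left
      · exact h.elim
      · exact h.elim
      exact lift_edge_step ends e0 he0
        (fun f hf => Finset.mem_image_of_mem _ hf) hf hor

/-- `S2` with `x ~ v`: connects iff `T` connects `G/uv`. -/
lemma connects_S2_R2_iff {T : Finset E} (he0 : e0 ∉ T) :
    Connects (subdivEnds ends e0) (insert (Sum.inl e0) (T.image Sum.inl))
        (fun a b => a = none ∧ b = some (ends e0).2)
      ↔ Connects ends T (fun a b => a = (ends e0).1 ∧ b = (ends e0).2) := by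
  constructor
  · intro hC
    refine connects_map (fun w : Option V => w.getD (ends e0).2) ?_ ?_ hC
    · exact fun w => ⟨some w, Relation.ReflTransGen.refl⟩
    rintro a b (⟨g, hg, hor⟩ | ⟨rfl, rfl⟩ | ⟨rfl, rfl⟩)
    rotate_left
    · exact Relation.ReflTransGen.refl
    · exact Relation.ReflTransGen.refl
    simp only [Finset.mem_insert, Finset.mem_image] at hg
    rcases hg with rfl | ⟨f, hf, rfl⟩
    · rw [subdivEnds_inl_e0] at hor
      rcases hor with h | h <;> rw [Prod.mk.injEq] at h <;> obtain ⟨h1, h2⟩ := h <;>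
        rw [← h1, ← h2]
      · exact Relation.ReflTransGen.single (Or.inr (Or.inl ⟨rfl, rfl⟩))
      · exact Relation.ReflTransGen.single (Or.inr (Or.inr ⟨rfl, rfl⟩))
    · exact proj_edge_step ends e0 he0 (fun w => w.getD (ends e0).2) (fun _ => rfl) hf hor
  · intro hC
    have he1 : (Sum.inl e0 : E ⊕ Unit) ∈ insert (Sum.inl e0) (T.image Sum.inl) :=
      Finset.mem_insert_self _ _
    refine connects_map (some : V → Option V) ?_ ?_ hC
    · intro w
      cases w with
      | none => exact ⟨(ends e0).2,
          Relation.ReflTransGen.single (Or.inr (Or.inl ⟨rfl, rfl⟩))⟩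
      | some z => exact ⟨z, Relation.ReflTransGen.refl⟩
    · rintro a b (⟨f, hf, hor⟩ | ⟨rfl, rfl⟩ | ⟨rfl, rfl⟩)
      · exact lift_edge_step ends e0 he0
          (fun f hf => Finset.mem_insert_of_mem (Finset.mem_image_of_mem _ hf)) hf hor
      · refine Relation.ReflTransGen.trans (b := (none : Option V)) ?_ ?_
        · exact Relation.ReflTransGen.single
            (Or.inl ⟨Sum.inl e0, he1, Or.inl (subdivEnds_inl_e0 ends e0)⟩)
        · exact Relation.ReflTransGen.single (Or.inr (Or.inl ⟨rfl, rfl⟩))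
      · refine Relation.ReflTransGen.trans (b := (none : Option V)) ?_ ?_
        · exact Relation.ReflTransGen.single (Or.inr (Or.inr ⟨rfl, rfl⟩))
        · exact Relation.ReflTransGen.single
            (Or.inl ⟨Sum.inl e0, he1, Or.inr (subdivEnds_inl_e0 ends e0)⟩)

/-- `S4` with `x ~ v`: connects iff `T` connects `G`. -/
lemma connects_S4_R2_iff {T : Finset E} (he0 : e0 ∉ T) :
    Connects (subdivEnds ends e0) (T.image Sum.inl)
        (fun a b => a = none ∧ b = some (ends e0).2)
      ↔ Connects ends T (fun _ _ => False) := by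
  constructor
  · intro hC
    refine connects_map (fun w : Option V => w.getD (ends e0).2) ?_ ?_ hC
    · exact fun w => ⟨some w, Relation.ReflTransGen.refl⟩
    rintro a b (⟨g, hg, hor⟩ | ⟨rfl, rfl⟩ | ⟨rfl, rfl⟩)
    rotate_left
    · exact Relation.ReflTransGen.refl
    · exact Relation.ReflTransGen.refl
    simp only [Finset.mem_image] at hg
    obtain ⟨f, hf, rfl⟩ := hg
    exact proj_edge_step ends e0 he0 (fun w => w.getD (ends e0).2) (fun _ => rfl) hf hor
  · intro hC
    refine connects_map (some : V → Option V) ?_ ?_ hC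
    · intro w
      cases w with
      | none => exact ⟨(ends e0).2,
          Relation.ReflTransGen.single (Or.inr (Or.inl ⟨rfl, rfl⟩))⟩
      | some z => exact ⟨z, Relation.ReflTransGen.refl⟩
    · rintro a b (⟨f, hf, hor⟩ | h | h)
      rotate_left
      · exact h.elim
      · exact h.elim
      exact lift_edge_step ends e0 he0
        (fun f hf => Finset.mem_image_of_mem _ hf) hf hor

end Aux6b
section Aux7
set_option linter.unusedSectionVars false

variable {V E : Type} [Fintype V] [Fintype E] [DecidableEq V] [DecidableEq E]
variable (ends : E → V × V) (e0 : E) (ℓ : E → ℝ) (aa bb : ℝ)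

/-- Decoder: the `G`-edge set underlying a subset of subdivided edges. -/
noncomputable def decPart (e0 : E) (S : Finset (E ⊕ Unit)) : Finset E :=
  Finset.univ.filter (fun f => f ≠ e0 ∧ Sum.inl f ∈ S)

lemma decPart_not_mem (S : Finset (E ⊕ Unit)) : e0 ∉ decPart e0 S := by
  simp [decPart]

lemma mem_decPart {S : Finset (E ⊕ Unit)} {f : E} :
    f ∈ decPart e0 S ↔ f ≠ e0 ∧ Sum.inl f ∈ S := by simp [decPart]

lemma subdivLen_inl_e0 : subdivLen ℓ e0 aa bb (Sum.inl e0) = aa := by simp [subdivLen]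
lemma subdivLen_inr : subdivLen ℓ e0 aa bb (Sum.inr ()) = bb := rfl
lemma subdivLen_inl_ne {f : E} (h : f ≠ e0) : subdivLen ℓ e0 aa bb (Sum.inl f) = ℓ f := by
  simp [subdivLen, h]

lemma inr_not_mem_image (X : Finset E) : (Sum.inr () : E ⊕ Unit) ∉ X.image (Sum.inl : E → E ⊕ Unit) := by
  simp

lemma inl_not_mem_image {X : Finset E} (hX : e0 ∉ X) :
    (Sum.inl e0 : E ⊕ Unit) ∉ X.image (Sum.inl : E → E ⊕ Unit) := by
  simp only [Finset.mem_image, Sum.inl.injEq]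
  rintro ⟨f, hf, rfl⟩
  exact hX hf

lemma card_S1 {T : Finset E} (he0 : e0 ∉ T) :
    (insert (Sum.inl e0) (insert (Sum.inr ()) (T.image (Sum.inl : E → E ⊕ Unit)))).card = T.card + 2 := by
  rw [Finset.card_insert_of_notMem, Finset.card_insert_of_notMem (inr_not_mem_image T),
    Finset.card_image_of_injective _ Sum.inl_injective]
  simp only [Finset.mem_insert]
  push_neg
  exact ⟨by simp, inl_not_mem_image (e0 := e0) he0⟩

lemma card_S2 {T : Finset E} (he0 : e0 ∉ T) :
    (insert (Sum.inl e0) (T.image (Sum.inl : E → E ⊕ Unit))).card = T.card + 1 := by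
  rw [Finset.card_insert_of_notMem (inl_not_mem_image (e0 := e0) he0),
    Finset.card_image_of_injective _ Sum.inl_injective]

lemma card_S3 (T : Finset E) :
    (insert (Sum.inr ()) (T.image (Sum.inl : E → E ⊕ Unit))).card = T.card + 1 := by
  rw [Finset.card_insert_of_notMem (inr_not_mem_image T),
    Finset.card_image_of_injective _ Sum.inl_injective]

lemma card_S4 (T : Finset E) : (T.image (Sum.inl : E → E ⊕ Unit)).card = T.card :=
  Finset.card_image_of_injective _ Sum.inl_injective

lemma compl_S1 {T : Finset E} (he0 : e0 ∉ T) :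
    (insert (Sum.inl e0) (insert (Sum.inr ()) (T.image (Sum.inl : E → E ⊕ Unit))))ᶜ
      = (Tᶜ.erase e0).image (Sum.inl : E → E ⊕ Unit) := by
  ext g
  cases g with
  | inl f =>
    by_cases hf : f = e0 <;>
      simp [Finset.mem_compl, Finset.mem_erase, hf, he0, Sum.inl_injective.eq_iff]
  | inr x =>
    cases x
    simp [Finset.mem_compl]

lemma compl_S2 {T : Finset E} (he0 : e0 ∉ T) :
    (insert (Sum.inl e0) (T.image (Sum.inl : E → E ⊕ Unit)))ᶜ
      = insert (Sum.inr ()) ((Tᶜ.erase e0).image (Sum.inl : E → E ⊕ Unit)) := by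
  ext g
  cases g with
  | inl f =>
    by_cases hf : f = e0 <;>
      simp [Finset.mem_compl, Finset.mem_erase, hf, he0, Sum.inl_injective.eq_iff]
  | inr x =>
    cases x
    simp [Finset.mem_compl]

lemma compl_S3 {T : Finset E} (he0 : e0 ∉ T) :
    (insert (Sum.inr ()) (T.image (Sum.inl : E → E ⊕ Unit)))ᶜ
      = insert (Sum.inl e0) ((Tᶜ.erase e0).image (Sum.inl : E → E ⊕ Unit)) := by
  ext g
  cases g with
  | inl f =>
    by_cases hf : f = e0 <;>
      simp [Finset.mem_compl, Finset.mem_erase, hf, he0, Sum.inl_injective.eq_iff]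
  | inr x =>
    cases x
    simp [Finset.mem_compl]

lemma compl_S4 {T : Finset E} (he0 : e0 ∉ T) :
    (T.image (Sum.inl : E → E ⊕ Unit))ᶜ
      = insert (Sum.inl e0) (insert (Sum.inr ()) ((Tᶜ.erase e0).image (Sum.inl : E → E ⊕ Unit))) := by
  ext g
  cases g with
  | inl f =>
    by_cases hf : f = e0 <;>
      simp [Finset.mem_compl, Finset.mem_erase, hf, he0, Sum.inl_injective.eq_iff]
  | inr x =>
    cases x
    simp [Finset.mem_compl]

lemma prod_subdiv_image (X : Finset E) (hX : e0 ∉ X) :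
    ∏ g ∈ X.image (Sum.inl : E → E ⊕ Unit), subdivLen ℓ e0 aa bb g = ∏ f ∈ X, ℓ f := by
  rw [Finset.prod_image (fun x _ y _ h => Sum.inl_injective h)]
  refine Finset.prod_congr rfl (fun f hf => ?_)
  exact subdivLen_inl_ne e0 ℓ aa bb (fun h => hX (h ▸ hf))

lemma weight_S1 {T : Finset E} (he0 : e0 ∉ T) :
    ∏ g ∈ (insert (Sum.inl e0) (insert (Sum.inr ()) (T.image (Sum.inl : E → E ⊕ Unit))))ᶜ,
        subdivLen ℓ e0 aa bb g = ∏ f ∈ Tᶜ.erase e0, ℓ f := by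
  rw [compl_S1 e0 he0, prod_subdiv_image e0 ℓ aa bb _ (Finset.notMem_erase e0 Tᶜ)]

lemma weight_S2 {T : Finset E} (he0 : e0 ∉ T) :
    ∏ g ∈ (insert (Sum.inl e0) (T.image (Sum.inl : E → E ⊕ Unit)))ᶜ, subdivLen ℓ e0 aa bb g
      = bb * ∏ f ∈ Tᶜ.erase e0, ℓ f := by
  rw [compl_S2 e0 he0, Finset.prod_insert (inr_not_mem_image _),
    prod_subdiv_image e0 ℓ aa bb _ (Finset.notMem_erase e0 Tᶜ)]
  rfl

lemma weight_S3 {T : Finset E} (he0 : e0 ∉ T) :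
    ∏ g ∈ (insert (Sum.inr ()) (T.image (Sum.inl : E → E ⊕ Unit)))ᶜ, subdivLen ℓ e0 aa bb g
      = aa * ∏ f ∈ Tᶜ.erase e0, ℓ f := by
  rw [compl_S3 e0 he0, Finset.prod_insert (inl_not_mem_image (e0 := e0) (Finset.notMem_erase e0 Tᶜ)),
    prod_subdiv_image e0 ℓ aa bb _ (Finset.notMem_erase e0 Tᶜ), subdivLen_inl_e0]

lemma weight_S4 {T : Finset E} (he0 : e0 ∉ T) :
    ∏ g ∈ (T.image (Sum.inl : E → E ⊕ Unit))ᶜ, subdivLen ℓ e0 aa bb g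
      = aa * (bb * ∏ f ∈ Tᶜ.erase e0, ℓ f) := by
  rw [compl_S4 e0 he0, Finset.prod_insert, Finset.prod_insert (inr_not_mem_image _),
    prod_subdiv_image e0 ℓ aa bb _ (Finset.notMem_erase e0 Tᶜ), subdivLen_inl_e0]
  · rfl
  · simp only [Finset.mem_insert]
    push_neg
    exact ⟨by simp, inl_not_mem_image (e0 := e0) (Finset.notMem_erase e0 Tᶜ)⟩

lemma decPart_S1 {T : Finset E} (he0 : e0 ∉ T) :
    decPart e0 (insert (Sum.inl e0) (insert (Sum.inr ()) (T.image (Sum.inl : E → E ⊕ Unit)))) = T := by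
  ext f
  simp only [mem_decPart, Finset.mem_insert, Finset.mem_image, Sum.inl.injEq]
  constructor
  · rintro ⟨hne, rfl | h | ⟨g, hg, rfl⟩⟩
    · exact absurd rfl hne
    · exact absurd h (by simp)
    · exact hg
  · intro hf
    exact ⟨fun h => he0 (h ▸ hf), Or.inr (Or.inr ⟨f, hf, rfl⟩)⟩

lemma decPart_S2 {T : Finset E} (he0 : e0 ∉ T) :
    decPart e0 (insert (Sum.inl e0) (T.image (Sum.inl : E → E ⊕ Unit))) = T := by
  ext f
  simp only [mem_decPart, Finset.mem_insert, Finset.mem_image, Sum.inl.injEq]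
  constructor
  · rintro ⟨hne, rfl | ⟨g, hg, rfl⟩⟩
    · exact absurd rfl hne
    · exact hg
  · intro hf
    exact ⟨fun h => he0 (h ▸ hf), Or.inr ⟨f, hf, rfl⟩⟩

lemma decPart_S3 {T : Finset E} (he0 : e0 ∉ T) :
    decPart e0 (insert (Sum.inr ()) (T.image (Sum.inl : E → E ⊕ Unit))) = T := by
  ext f
  simp only [mem_decPart, Finset.mem_insert, Finset.mem_image, Sum.inl.injEq]
  constructor
  · rintro ⟨hne, h | ⟨g, hg, rfl⟩⟩
    · exact absurd h (by simp)
    · exact hg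
  · intro hf
    exact ⟨fun h => he0 (h ▸ hf), Or.inr ⟨f, hf, rfl⟩⟩

lemma decPart_S4 {T : Finset E} (he0 : e0 ∉ T) :
    decPart e0 (T.image (Sum.inl : E → E ⊕ Unit)) = T := by
  ext f
  simp only [mem_decPart, Finset.mem_image, Sum.inl.injEq]
  constructor
  · rintro ⟨hne, g, hg, rfl⟩
    exact hg
  · intro hf
    exact ⟨fun h => he0 (h ▸ hf), ⟨f, hf, rfl⟩⟩

lemma recon_S1 {S : Finset (E ⊕ Unit)} (h1 : Sum.inl e0 ∈ S) (h2 : Sum.inr () ∈ S) :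
    S = insert (Sum.inl e0) (insert (Sum.inr ()) ((decPart e0 S).image (Sum.inl : E → E ⊕ Unit))) := by
  ext g
  cases g with
  | inl f =>
    by_cases hf : f = e0
    · subst hf; simp [h1]
    · simp [hf, mem_decPart, Sum.inl_injective.eq_iff]
  | inr x =>
    cases x
    simp [h2]

lemma recon_S2 {S : Finset (E ⊕ Unit)} (h1 : Sum.inl e0 ∈ S) (h2 : Sum.inr () ∉ S) :
    S = insert (Sum.inl e0) ((decPart e0 S).image (Sum.inl : E → E ⊕ Unit)) := by
  ext g
  cases g with
  | inl f =>
    by_cases hf : f = e0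
    · subst hf; simp [h1]
    · simp [hf, mem_decPart, Sum.inl_injective.eq_iff]
  | inr x =>
    cases x
    simp [h2]

lemma recon_S3 {S : Finset (E ⊕ Unit)} (h1 : Sum.inl e0 ∉ S) (h2 : Sum.inr () ∈ S) :
    S = insert (Sum.inr ()) ((decPart e0 S).image (Sum.inl : E → E ⊕ Unit)) := by
  ext g
  cases g with
  | inl f =>
    by_cases hf : f = e0
    · subst hf; simp [h1, mem_decPart]
    · simp [hf, mem_decPart, Sum.inl_injective.eq_iff]
  | inr x =>
    cases x
    simp [h2]

lemma recon_S4 {S : Finset (E ⊕ Unit)} (h1 : Sum.inl e0 ∉ S) (h2 : Sum.inr () ∉ S) :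
    S = (decPart e0 S).image (Sum.inl : E → E ⊕ Unit) := by
  ext g
  cases g with
  | inl f =>
    by_cases hf : f = e0
    · subst hf; simp [h1, mem_decPart]
    · simp [hf, mem_decPart, Sum.inl_injective.eq_iff]
  | inr x =>
    cases x
    simp [h2]

end Aux7
section Aux8
set_option linter.unusedSectionVars false
set_option maxHeartbeats 1000000

variable {V E : Type} [Fintype V] [Fintype E] [DecidableEq V] [DecidableEq E]

open scoped Classical in
/-- `σ = Σ_{T spanning tree of G/uv} Π_{f ∉ T, f ≠ e0} ℓ_f`. -/
noncomputable def sigmaPoly (ends : E → V × V) (e0 : E) (ℓ : E → ℝ) : ℝ :=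
  ∑ T ∈ Finset.univ.filter
      (fun T : Finset E => T.card + 2 = Fintype.card V ∧
        Connects ends T (fun a b => a = (ends e0).1 ∧ b = (ends e0).2)),
    ∏ f ∈ Tᶜ.erase e0, ℓ f

open scoped Classical in
/-- `τ₀' = Σ_{T spanning tree of G, e0 ∉ T} Π_{f ∉ T, f ≠ e0} ℓ_f`. -/
noncomputable def tau0Poly (ends : E → V × V) (e0 : E) (ℓ : E → ℝ) : ℝ :=
  ∑ T ∈ Finset.univ.filter
      (fun T : Finset E => T.card + 1 = Fintype.card V ∧
        Connects ends T (fun _ _ => False) ∧ e0 ∉ T),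
    ∏ f ∈ Tᶜ.erase e0, ℓ f

open scoped Classical in
lemma contract_G_eq (ends : E → V × V) (e0 : E) (ℓ : E → ℝ) :
    treePolyContract ends (ends e0).1 (ends e0).2 ℓ = ℓ e0 * sigmaPoly ends e0 ℓ := by
  unfold treePolyContract sigmaPoly
  rw [Finset.mul_sum]
  refine Finset.sum_congr rfl (fun T hT => ?_)
  simp only [Finset.mem_filter, Finset.mem_univ, true_and] at hT
  have he0 : e0 ∉ T := contract_tree_not_mem (ends := ends) (e := e0) rfl hT.1 hT.2
  exact (Finset.mul_prod_erase _ _ (Finset.mem_compl.mpr he0)).symm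

open scoped Classical in
lemma treePoly_G_eq (ends : E → V × V) (e0 : E) (ℓ : E → ℝ) :
    treePoly ends ℓ = sigmaPoly ends e0 ℓ + ℓ e0 * tau0Poly ends e0 ℓ := by
  unfold treePoly
  rw [← Finset.sum_filter_add_sum_filter_not
    (Finset.univ.filter (fun T : Finset E => T.card + 1 = Fintype.card V ∧
      Connects ends T (fun _ _ => False))) (fun T => e0 ∈ T)]
  congr 1
  · -- trees containing e0 ↔ trees of the contraction
    unfold sigmaPoly
    refine Finset.sum_nbij' (fun T => T.erase e0) (fun T => insert e0 T) ?_ ?_ ?_ ?_ ?_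
    · intro T hT
      simp only [Finset.mem_filter, Finset.mem_univ, true_and] at hT
      obtain ⟨⟨hcard, hconn⟩, hmem⟩ := hT
      simp only [Finset.mem_filter, Finset.mem_univ, true_and]
      have h1 : 1 ≤ T.card := Finset.card_pos.mpr ⟨e0, hmem⟩
      refine ⟨by rw [Finset.card_erase_of_mem hmem]; omega, ?_⟩
      exact connects_contract_of_connects rfl hconn
    · intro T hT
      simp only [Finset.mem_filter, Finset.mem_univ, true_and] at hT
      obtain ⟨hcard, hconn⟩ := hT
      have he0 : e0 ∉ T := contract_tree_not_mem (ends := ends) (e := e0) rfl hcard hconn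
      simp only [Finset.mem_filter, Finset.mem_univ, true_and]
      refine ⟨⟨by rw [Finset.card_insert_of_notMem he0]; omega, ?_⟩,
        Finset.mem_insert_self e0 T⟩
      refine connects_of_contract rfl (Finset.mem_insert_self e0 T) ?_
      rw [Finset.erase_insert he0]
      exact hconn
    · intro T hT
      simp only [Finset.mem_filter] at hT
      exact Finset.insert_erase hT.2
    · intro T hT
      simp only [Finset.mem_filter, Finset.mem_univ, true_and] at hT
      exact Finset.erase_insert (contract_tree_not_mem (ends := ends) (e := e0) rfl hT.1 hT.2)
    · intro T hT
      simp only [Finset.mem_filter] at hT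
      have he0c : e0 ∉ Tᶜ := by simp [hT.2]
      rw [Finset.compl_erase, Finset.erase_insert he0c]
  · -- trees avoiding e0
    have hset : (Finset.univ.filter (fun T : Finset E => T.card + 1 = Fintype.card V ∧
        Connects ends T (fun _ _ => False))).filter (fun T => ¬ e0 ∈ T)
        = Finset.univ.filter (fun T : Finset E => T.card + 1 = Fintype.card V ∧
            Connects ends T (fun _ _ => False) ∧ e0 ∉ T) := by
      ext T
      simp only [Finset.mem_filter, Finset.mem_univ, true_and]
      tauto
    rw [hset]
    unfold tau0Poly
    rw [Finset.mul_sum]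
    refine Finset.sum_congr rfl (fun T hT => ?_)
    simp only [Finset.mem_filter, Finset.mem_univ, true_and] at hT
    exact (Finset.mul_prod_erase _ _ (Finset.mem_compl.mpr hT.2.2)).symm

end Aux8
section Aux9
set_option linter.unusedSectionVars false
set_option maxHeartbeats 1000000

variable {V E : Type} [Fintype V] [Fintype E] [DecidableEq V] [DecidableEq E]
variable (ends : E → V × V) (e0 : E) (ℓ : E → ℝ) (aa bb : ℝ)

open scoped Classical in
lemma piece_I_tt :
    ∑ S ∈ Finset.univ.filter (fun S : Finset (E ⊕ Unit) =>
        (S.card + 1 = Fintype.card (Option V) ∧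
          Connects (subdivEnds ends e0) S (fun _ _ => False)) ∧
        Sum.inl e0 ∈ S ∧ Sum.inr () ∈ S),
      ∏ g ∈ Sᶜ, subdivLen ℓ e0 aa bb g
    = sigmaPoly ends e0 ℓ := by
  unfold sigmaPoly
  refine Finset.sum_nbij' (fun S => decPart e0 S)
    (fun T => insert (Sum.inl e0) (insert (Sum.inr ()) (T.image Sum.inl))) ?_ ?_ ?_ ?_ ?_
  · intro S hS
    simp only [Finset.mem_filter, Finset.mem_univ, true_and] at hS
    obtain ⟨⟨hcard, hconn⟩, h1, h2⟩ := hS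
    have hrec := recon_S1 e0 h1 h2
    rw [Fintype.card_option] at hcard
    rw [hrec] at hconn hcard
    rw [card_S1 e0 (decPart_not_mem e0 S)] at hcard
    simp only [Finset.mem_filter, Finset.mem_univ, true_and]
    exact ⟨by omega, (connects_S1_iff ends e0 (decPart_not_mem e0 S)).mp hconn⟩
  · intro T hT
    simp only [Finset.mem_filter, Finset.mem_univ, true_and] at hT
    obtain ⟨hcard, hconn⟩ := hT
    have he0T : e0 ∉ T := contract_tree_not_mem (ends := ends) (e := e0) rfl hcard hconn
    simp only [Finset.mem_filter, Finset.mem_univ, true_and]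
    refine ⟨⟨?_, (connects_S1_iff ends e0 he0T).mpr hconn⟩,
      Finset.mem_insert_self _ _, Finset.mem_insert_of_mem (Finset.mem_insert_self _ _)⟩
    rw [Fintype.card_option, card_S1 e0 he0T]
    omega
  · intro S hS
    simp only [Finset.mem_filter, Finset.mem_univ, true_and] at hS
    exact (recon_S1 e0 hS.2.1 hS.2.2).symm
  · intro T hT
    simp only [Finset.mem_filter, Finset.mem_univ, true_and] at hT
    exact decPart_S1 e0
      (contract_tree_not_mem (ends := ends) (e := e0) rfl hT.1 hT.2)
  · intro S hS
    simp only [Finset.mem_filter, Finset.mem_univ, true_and] at hS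
    conv_lhs => rw [recon_S1 e0 hS.2.1 hS.2.2]
    exact weight_S1 e0 ℓ aa bb (decPart_not_mem e0 S)

open scoped Classical in
lemma piece_I_tf :
    ∑ S ∈ Finset.univ.filter (fun S : Finset (E ⊕ Unit) =>
        (S.card + 1 = Fintype.card (Option V) ∧
          Connects (subdivEnds ends e0) S (fun _ _ => False)) ∧
        Sum.inl e0 ∈ S ∧ Sum.inr () ∉ S),
      ∏ g ∈ Sᶜ, subdivLen ℓ e0 aa bb g
    = bb * tau0Poly ends e0 ℓ := by
  unfold tau0Poly
  rw [Finset.mul_sum]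
  refine Finset.sum_nbij' (fun S => decPart e0 S)
    (fun T => insert (Sum.inl e0) (T.image Sum.inl)) ?_ ?_ ?_ ?_ ?_
  · intro S hS
    simp only [Finset.mem_filter, Finset.mem_univ, true_and] at hS
    obtain ⟨⟨hcard, hconn⟩, h1, h2⟩ := hS
    have hrec := recon_S2 e0 h1 h2
    rw [Fintype.card_option] at hcard
    rw [hrec] at hconn hcard
    rw [card_S2 e0 (decPart_not_mem e0 S)] at hcard
    simp only [Finset.mem_filter, Finset.mem_univ, true_and]
    exact ⟨by omega, (connects_S2_iff ends e0 (decPart_not_mem e0 S)).mp hconn,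
      decPart_not_mem e0 S⟩
  · intro T hT
    simp only [Finset.mem_filter, Finset.mem_univ, true_and] at hT
    obtain ⟨hcard, hconn, he0T⟩ := hT
    simp only [Finset.mem_filter, Finset.mem_univ, true_and]
    refine ⟨⟨?_, (connects_S2_iff ends e0 he0T).mpr hconn⟩,
      Finset.mem_insert_self _ _, ?_⟩
    · rw [Fintype.card_option, card_S2 e0 he0T]
      omega
    · simp only [Finset.mem_insert]
      push_neg
      exact ⟨by simp, inr_not_mem_image T⟩
  · intro S hS
    simp only [Finset.mem_filter, Finset.mem_univ, true_and] at hS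
    exact (recon_S2 e0 hS.2.1 hS.2.2).symm
  · intro T hT
    simp only [Finset.mem_filter, Finset.mem_univ, true_and] at hT
    exact decPart_S2 e0 hT.2.2
  · intro S hS
    simp only [Finset.mem_filter, Finset.mem_univ, true_and] at hS
    conv_lhs => rw [recon_S2 e0 hS.2.1 hS.2.2]
    exact weight_S2 e0 ℓ aa bb (decPart_not_mem e0 S)

open scoped Classical in
lemma piece_I_ft :
    ∑ S ∈ Finset.univ.filter (fun S : Finset (E ⊕ Unit) =>
        (S.card + 1 = Fintype.card (Option V) ∧
          Connects (subdivEnds ends e0) S (fun _ _ => False)) ∧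
        Sum.inl e0 ∉ S ∧ Sum.inr () ∈ S),
      ∏ g ∈ Sᶜ, subdivLen ℓ e0 aa bb g
    = aa * tau0Poly ends e0 ℓ := by
  unfold tau0Poly
  rw [Finset.mul_sum]
  refine Finset.sum_nbij' (fun S => decPart e0 S)
    (fun T => insert (Sum.inr ()) (T.image Sum.inl)) ?_ ?_ ?_ ?_ ?_
  · intro S hS
    simp only [Finset.mem_filter, Finset.mem_univ, true_and] at hS
    obtain ⟨⟨hcard, hconn⟩, h1, h2⟩ := hS
    have hrec := recon_S3 e0 h1 h2
    rw [Fintype.card_option] at hcard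
    rw [hrec] at hconn hcard
    rw [card_S3 (decPart e0 S)] at hcard
    simp only [Finset.mem_filter, Finset.mem_univ, true_and]
    exact ⟨by omega, (connects_S3_iff ends e0 (decPart_not_mem e0 S)).mp hconn,
      decPart_not_mem e0 S⟩
  · intro T hT
    simp only [Finset.mem_filter, Finset.mem_univ, true_and] at hT
    obtain ⟨hcard, hconn, he0T⟩ := hT
    simp only [Finset.mem_filter, Finset.mem_univ, true_and]
    refine ⟨⟨?_, (connects_S3_iff ends e0 he0T).mpr hconn⟩, ?_,
      Finset.mem_insert_self _ _⟩
    · rw [Fintype.card_option, card_S3 T]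
      omega
    · simp only [Finset.mem_insert]
      push_neg
      exact ⟨by simp, inl_not_mem_image (e0 := e0) he0T⟩
  · intro S hS
    simp only [Finset.mem_filter, Finset.mem_univ, true_and] at hS
    exact (recon_S3 e0 hS.2.1 hS.2.2).symm
  · intro T hT
    simp only [Finset.mem_filter, Finset.mem_univ, true_and] at hT
    exact decPart_S3 e0 hT.2.2
  · intro S hS
    simp only [Finset.mem_filter, Finset.mem_univ, true_and] at hS
    conv_lhs => rw [recon_S3 e0 hS.2.1 hS.2.2]
    exact weight_S3 e0 ℓ aa bb (decPart_not_mem e0 S)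

open scoped Classical in
lemma piece_I_ff (hV : Nonempty V) :
    Finset.univ.filter (fun S : Finset (E ⊕ Unit) =>
        (S.card + 1 = Fintype.card (Option V) ∧
          Connects (subdivEnds ends e0) S (fun _ _ => False)) ∧
        Sum.inl e0 ∉ S ∧ Sum.inr () ∉ S) = ∅ := by
  refine Finset.eq_empty_of_forall_notMem (fun S hS => ?_)
  simp only [Finset.mem_filter, Finset.mem_univ, true_and] at hS
  obtain ⟨⟨hcard, hconn⟩, h1, h2⟩ := hS
  rw [recon_S4 e0 h1 h2] at hconn
  exact not_connects_S4 ends e0 hV (decPart_not_mem e0 S) hconn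

end Aux9
section Aux10
set_option linter.unusedSectionVars false
set_option maxHeartbeats 1000000

variable {V E : Type} [Fintype V] [Fintype E] [DecidableEq V] [DecidableEq E]
variable (ends : E → V × V) (e0 : E) (ℓ : E → ℝ) (aa bb : ℝ)

open scoped Classical in
lemma piece_II_t :
    Finset.univ.filter (fun S : Finset (E ⊕ Unit) =>
        (S.card + 2 = Fintype.card (Option V) ∧
          Connects (subdivEnds ends e0) S
            (fun p q => p = some (ends e0).1 ∧ q = none)) ∧
        Sum.inl e0 ∈ S) = ∅ := by
  refine Finset.eq_empty_of_forall_notMem (fun S hS => ?_)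
  simp only [Finset.mem_filter, Finset.mem_univ, true_and] at hS
  obtain ⟨⟨hcard, hconn⟩, h1⟩ := hS
  exact contract_tree_not_mem (ends := subdivEnds ends e0) (e := Sum.inl e0)
    (subdivEnds_inl_e0 ends e0) hcard hconn h1

open scoped Classical in
lemma piece_II_ft :
    ∑ S ∈ Finset.univ.filter (fun S : Finset (E ⊕ Unit) =>
        (S.card + 2 = Fintype.card (Option V) ∧
          Connects (subdivEnds ends e0) S
            (fun p q => p = some (ends e0).1 ∧ q = none)) ∧
        Sum.inl e0 ∉ S ∧ Sum.inr () ∈ S),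
      ∏ g ∈ Sᶜ, subdivLen ℓ e0 aa bb g
    = aa * sigmaPoly ends e0 ℓ := by
  unfold sigmaPoly
  rw [Finset.mul_sum]
  refine Finset.sum_nbij' (fun S => decPart e0 S)
    (fun T => insert (Sum.inr ()) (T.image Sum.inl)) ?_ ?_ ?_ ?_ ?_
  · intro S hS
    simp only [Finset.mem_filter, Finset.mem_univ, true_and] at hS
    obtain ⟨⟨hcard, hconn⟩, h1, h2⟩ := hS
    have hrec := recon_S3 e0 h1 h2
    rw [Fintype.card_option] at hcard
    rw [hrec] at hconn hcard
    rw [card_S3 (decPart e0 S)] at hcard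
    simp only [Finset.mem_filter, Finset.mem_univ, true_and]
    exact ⟨by omega, (connects_S3_R1_iff ends e0 (decPart_not_mem e0 S)).mp hconn⟩
  · intro T hT
    simp only [Finset.mem_filter, Finset.mem_univ, true_and] at hT
    obtain ⟨hcard, hconn⟩ := hT
    have he0T : e0 ∉ T := contract_tree_not_mem (ends := ends) (e := e0) rfl hcard hconn
    simp only [Finset.mem_filter, Finset.mem_univ, true_and]
    refine ⟨⟨?_, (connects_S3_R1_iff ends e0 he0T).mpr hconn⟩, ?_,
      Finset.mem_insert_self _ _⟩
    · rw [Fintype.card_option, card_S3 T]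
      omega
    · simp only [Finset.mem_insert]
      push_neg
      exact ⟨by simp, inl_not_mem_image (e0 := e0) he0T⟩
  · intro S hS
    simp only [Finset.mem_filter, Finset.mem_univ, true_and] at hS
    exact (recon_S3 e0 hS.2.1 hS.2.2).symm
  · intro T hT
    simp only [Finset.mem_filter, Finset.mem_univ, true_and] at hT
    exact decPart_S3 e0 (contract_tree_not_mem (ends := ends) (e := e0) rfl hT.1 hT.2)
  · intro S hS
    simp only [Finset.mem_filter, Finset.mem_univ, true_and] at hS
    conv_lhs => rw [recon_S3 e0 hS.2.1 hS.2.2]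
    exact weight_S3 e0 ℓ aa bb (decPart_not_mem e0 S)

open scoped Classical in
lemma piece_II_ff :
    ∑ S ∈ Finset.univ.filter (fun S : Finset (E ⊕ Unit) =>
        (S.card + 2 = Fintype.card (Option V) ∧
          Connects (subdivEnds ends e0) S
            (fun p q => p = some (ends e0).1 ∧ q = none)) ∧
        Sum.inl e0 ∉ S ∧ Sum.inr () ∉ S),
      ∏ g ∈ Sᶜ, subdivLen ℓ e0 aa bb g
    = aa * (bb * tau0Poly ends e0 ℓ) := by
  unfold tau0Poly
  rw [Finset.mul_sum, Finset.mul_sum]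
  refine Finset.sum_nbij' (fun S => decPart e0 S)
    (fun T => T.image Sum.inl) ?_ ?_ ?_ ?_ ?_
  · intro S hS
    simp only [Finset.mem_filter, Finset.mem_univ, true_and] at hS
    obtain ⟨⟨hcard, hconn⟩, h1, h2⟩ := hS
    have hrec := recon_S4 e0 h1 h2
    rw [Fintype.card_option] at hcard
    rw [hrec] at hconn hcard
    rw [card_S4 (decPart e0 S)] at hcard
    simp only [Finset.mem_filter, Finset.mem_univ, true_and]
    exact ⟨by omega, (connects_S4_R1_iff ends e0 (decPart_not_mem e0 S)).mp hconn,
      decPart_not_mem e0 S⟩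
  · intro T hT
    simp only [Finset.mem_filter, Finset.mem_univ, true_and] at hT
    obtain ⟨hcard, hconn, he0T⟩ := hT
    simp only [Finset.mem_filter, Finset.mem_univ, true_and]
    refine ⟨⟨?_, (connects_S4_R1_iff ends e0 he0T).mpr hconn⟩,
      inl_not_mem_image (e0 := e0) he0T, inr_not_mem_image T⟩
    rw [Fintype.card_option, card_S4 T]
    omega
  · intro S hS
    simp only [Finset.mem_filter, Finset.mem_univ, true_and] at hS
    exact (recon_S4 e0 hS.2.1 hS.2.2).symm
  · intro T hT
    simp only [Finset.mem_filter, Finset.mem_univ, true_and] at hT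
    exact decPart_S4 e0 hT.2.2
  · intro S hS
    simp only [Finset.mem_filter, Finset.mem_univ, true_and] at hS
    conv_lhs => rw [recon_S4 e0 hS.2.1 hS.2.2]
    exact weight_S4 e0 ℓ aa bb (decPart_not_mem e0 S)

open scoped Classical in
lemma piece_III_t :
    Finset.univ.filter (fun S : Finset (E ⊕ Unit) =>
        (S.card + 2 = Fintype.card (Option V) ∧
          Connects (subdivEnds ends e0) S
            (fun p q => p = none ∧ q = some (ends e0).2)) ∧
        Sum.inr () ∈ S) = ∅ := by
  refine Finset.eq_empty_of_forall_notMem (fun S hS => ?_)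
  simp only [Finset.mem_filter, Finset.mem_univ, true_and] at hS
  obtain ⟨⟨hcard, hconn⟩, h1⟩ := hS
  exact contract_tree_not_mem (ends := subdivEnds ends e0) (e := Sum.inr ())
    (subdivEnds_inr ends e0) hcard hconn h1

open scoped Classical in
lemma piece_III_tf :
    ∑ S ∈ Finset.univ.filter (fun S : Finset (E ⊕ Unit) =>
        (S.card + 2 = Fintype.card (Option V) ∧
          Connects (subdivEnds ends e0) S
            (fun p q => p = none ∧ q = some (ends e0).2)) ∧
        Sum.inr () ∉ S ∧ Sum.inl e0 ∈ S),
      ∏ g ∈ Sᶜ, subdivLen ℓ e0 aa bb g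
    = bb * sigmaPoly ends e0 ℓ := by
  unfold sigmaPoly
  rw [Finset.mul_sum]
  refine Finset.sum_nbij' (fun S => decPart e0 S)
    (fun T => insert (Sum.inl e0) (T.image Sum.inl)) ?_ ?_ ?_ ?_ ?_
  · intro S hS
    simp only [Finset.mem_filter, Finset.mem_univ, true_and] at hS
    obtain ⟨⟨hcard, hconn⟩, h2, h1⟩ := hS
    have hrec := recon_S2 e0 h1 h2
    rw [Fintype.card_option] at hcard
    rw [hrec] at hconn hcard
    rw [card_S2 e0 (decPart_not_mem e0 S)] at hcard
    simp only [Finset.mem_filter, Finset.mem_univ, true_and]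
    exact ⟨by omega, (connects_S2_R2_iff ends e0 (decPart_not_mem e0 S)).mp hconn⟩
  · intro T hT
    simp only [Finset.mem_filter, Finset.mem_univ, true_and] at hT
    obtain ⟨hcard, hconn⟩ := hT
    have he0T : e0 ∉ T := contract_tree_not_mem (ends := ends) (e := e0) rfl hcard hconn
    simp only [Finset.mem_filter, Finset.mem_univ, true_and]
    refine ⟨⟨?_, (connects_S2_R2_iff ends e0 he0T).mpr hconn⟩, ?_,
      Finset.mem_insert_self _ _⟩
    · rw [Fintype.card_option, card_S2 e0 he0T]
      omega
    · simp only [Finset.mem_insert]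
      push_neg
      exact ⟨by simp, inr_not_mem_image T⟩
  · intro S hS
    simp only [Finset.mem_filter, Finset.mem_univ, true_and] at hS
    exact (recon_S2 e0 hS.2.2 hS.2.1).symm
  · intro T hT
    simp only [Finset.mem_filter, Finset.mem_univ, true_and] at hT
    exact decPart_S2 e0 (contract_tree_not_mem (ends := ends) (e := e0) rfl hT.1 hT.2)
  · intro S hS
    simp only [Finset.mem_filter, Finset.mem_univ, true_and] at hS
    conv_lhs => rw [recon_S2 e0 hS.2.2 hS.2.1]
    exact weight_S2 e0 ℓ aa bb (decPart_not_mem e0 S)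

open scoped Classical in
lemma piece_III_ff :
    ∑ S ∈ Finset.univ.filter (fun S : Finset (E ⊕ Unit) =>
        (S.card + 2 = Fintype.card (Option V) ∧
          Connects (subdivEnds ends e0) S
            (fun p q => p = none ∧ q = some (ends e0).2)) ∧
        Sum.inr () ∉ S ∧ Sum.inl e0 ∉ S),
      ∏ g ∈ Sᶜ, subdivLen ℓ e0 aa bb g
    = aa * (bb * tau0Poly ends e0 ℓ) := by
  unfold tau0Poly
  rw [Finset.mul_sum, Finset.mul_sum]
  refine Finset.sum_nbij' (fun S => decPart e0 S)
    (fun T => T.image Sum.inl) ?_ ?_ ?_ ?_ ?_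
  · intro S hS
    simp only [Finset.mem_filter, Finset.mem_univ, true_and] at hS
    obtain ⟨⟨hcard, hconn⟩, h2, h1⟩ := hS
    have hrec := recon_S4 e0 h1 h2
    rw [Fintype.card_option] at hcard
    rw [hrec] at hconn hcard
    rw [card_S4 (decPart e0 S)] at hcard
    simp only [Finset.mem_filter, Finset.mem_univ, true_and]
    exact ⟨by omega, (connects_S4_R2_iff ends e0 (decPart_not_mem e0 S)).mp hconn,
      decPart_not_mem e0 S⟩
  · intro T hT
    simp only [Finset.mem_filter, Finset.mem_univ, true_and] at hT
    obtain ⟨hcard, hconn, he0T⟩ := hT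
    simp only [Finset.mem_filter, Finset.mem_univ, true_and]
    refine ⟨⟨?_, (connects_S4_R2_iff ends e0 he0T).mpr hconn⟩,
      inr_not_mem_image T, inl_not_mem_image (e0 := e0) he0T⟩
    rw [Fintype.card_option, card_S4 T]
    omega
  · intro S hS
    simp only [Finset.mem_filter, Finset.mem_univ, true_and] at hS
    exact (recon_S4 e0 hS.2.2 hS.2.1).symm
  · intro T hT
    simp only [Finset.mem_filter, Finset.mem_univ, true_and] at hT
    exact decPart_S4 e0 hT.2.2
  · intro S hS
    simp only [Finset.mem_filter, Finset.mem_univ, true_and] at hS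
    conv_lhs => rw [recon_S4 e0 hS.2.2 hS.2.1]
    exact weight_S4 e0 ℓ aa bb (decPart_not_mem e0 S)

end Aux10
section Aux11
set_option linter.unusedSectionVars false
set_option maxHeartbeats 1000000

variable {V E : Type} [Fintype V] [Fintype E] [DecidableEq V] [DecidableEq E]

lemma sum_split4 {α : Type} [Fintype α] (P p q : α → Prop)
    [DecidablePred P] [DecidablePred p] [DecidablePred q] (f : α → ℝ) :
    ∑ x ∈ Finset.univ.filter P, f x
      = ∑ x ∈ Finset.univ.filter (fun x => P x ∧ p x ∧ q x), f x
        + ∑ x ∈ Finset.univ.filter (fun x => P x ∧ p x ∧ ¬ q x), f x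
        + ∑ x ∈ Finset.univ.filter (fun x => P x ∧ ¬ p x ∧ q x), f x
        + ∑ x ∈ Finset.univ.filter (fun x => P x ∧ ¬ p x ∧ ¬ q x), f x := by
  rw [Finset.sum_filter, Finset.sum_filter, Finset.sum_filter, Finset.sum_filter,
    Finset.sum_filter, ← Finset.sum_add_distrib, ← Finset.sum_add_distrib,
    ← Finset.sum_add_distrib]
  refine Finset.sum_congr rfl (fun x _ => ?_)
  by_cases hP : P x <;> by_cases hp : p x <;> by_cases hq : q x <;> simp [hP, hp, hq]

variable (ends : E → V × V) (e0 : E) (ℓ : E → ℝ) (aa bb : ℝ)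

open scoped Classical in
lemma treePoly_H_eq (hV : Nonempty V) :
    treePoly (subdivEnds ends e0) (subdivLen ℓ e0 aa bb)
      = sigmaPoly ends e0 ℓ + (aa + bb) * tau0Poly ends e0 ℓ := by
  unfold treePoly
  rw [sum_split4 _ (fun S : Finset (E ⊕ Unit) => Sum.inl e0 ∈ S)
    (fun S : Finset (E ⊕ Unit) => Sum.inr () ∈ S)]
  rw [piece_I_tt ends e0 ℓ aa bb, piece_I_tf ends e0 ℓ aa bb, piece_I_ft ends e0 ℓ aa bb,
    piece_I_ff ends e0 hV]
  ring

open scoped Classical in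
lemma contract_R1_eq :
    treePolyContract (subdivEnds ends e0) (some (ends e0).1) none (subdivLen ℓ e0 aa bb)
      = aa * sigmaPoly ends e0 ℓ + aa * (bb * tau0Poly ends e0 ℓ) := by
  unfold treePolyContract
  rw [sum_split4 _ (fun S : Finset (E ⊕ Unit) => Sum.inl e0 ∈ S)
    (fun S : Finset (E ⊕ Unit) => Sum.inr () ∈ S)]
  have htt : Finset.univ.filter (fun S : Finset (E ⊕ Unit) =>
      (S.card + 2 = Fintype.card (Option V) ∧
        Connects (subdivEnds ends e0) S
          (fun p q => p = some (ends e0).1 ∧ q = none)) ∧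
      Sum.inl e0 ∈ S ∧ Sum.inr () ∈ S) = ∅ := by
    refine Finset.eq_empty_of_forall_notMem (fun S hS => ?_)
    simp only [Finset.mem_filter, Finset.mem_univ, true_and] at hS
    exact contract_tree_not_mem (ends := subdivEnds ends e0) (e := Sum.inl e0)
      (subdivEnds_inl_e0 ends e0) hS.1.1 hS.1.2 hS.2.1
  have htf : Finset.univ.filter (fun S : Finset (E ⊕ Unit) =>
      (S.card + 2 = Fintype.card (Option V) ∧
        Connects (subdivEnds ends e0) S
          (fun p q => p = some (ends e0).1 ∧ q = none)) ∧
      Sum.inl e0 ∈ S ∧ Sum.inr () ∉ S) = ∅ := by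
    refine Finset.eq_empty_of_forall_notMem (fun S hS => ?_)
    simp only [Finset.mem_filter, Finset.mem_univ, true_and] at hS
    exact contract_tree_not_mem (ends := subdivEnds ends e0) (e := Sum.inl e0)
      (subdivEnds_inl_e0 ends e0) hS.1.1 hS.1.2 hS.2.1
  rw [htt, htf, piece_II_ft ends e0 ℓ aa bb,
    piece_II_ff ends e0 ℓ aa bb]
  ring

open scoped Classical in
lemma contract_R2_eq :
    treePolyContract (subdivEnds ends e0) none (some (ends e0).2) (subdivLen ℓ e0 aa bb)
      = bb * sigmaPoly ends e0 ℓ + aa * (bb * tau0Poly ends e0 ℓ) := by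
  unfold treePolyContract
  rw [sum_split4 _ (fun S : Finset (E ⊕ Unit) => Sum.inr () ∈ S)
    (fun S : Finset (E ⊕ Unit) => Sum.inl e0 ∈ S)]
  have htt : Finset.univ.filter (fun S : Finset (E ⊕ Unit) =>
      (S.card + 2 = Fintype.card (Option V) ∧
        Connects (subdivEnds ends e0) S
          (fun p q => p = none ∧ q = some (ends e0).2)) ∧
      Sum.inr () ∈ S ∧ Sum.inl e0 ∈ S) = ∅ := by
    refine Finset.eq_empty_of_forall_notMem (fun S hS => ?_)
    simp only [Finset.mem_filter, Finset.mem_univ, true_and] at hS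
    exact contract_tree_not_mem (ends := subdivEnds ends e0) (e := Sum.inr ())
      (subdivEnds_inr ends e0) hS.1.1 hS.1.2 hS.2.1
  have htf : Finset.univ.filter (fun S : Finset (E ⊕ Unit) =>
      (S.card + 2 = Fintype.card (Option V) ∧
        Connects (subdivEnds ends e0) S
          (fun p q => p = none ∧ q = some (ends e0).2)) ∧
      Sum.inr () ∈ S ∧ Sum.inl e0 ∉ S) = ∅ := by
    refine Finset.eq_empty_of_forall_notMem (fun S hS => ?_)
    simp only [Finset.mem_filter, Finset.mem_univ, true_and] at hS
    exact contract_tree_not_mem (ends := subdivEnds ends e0) (e := Sum.inr ())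
      (subdivEnds_inr ends e0) hS.1.1 hS.1.2 hS.2.1
  rw [htt, htf, piece_III_tf ends e0 ℓ aa bb,
    piece_III_ff ends e0 ℓ aa bb]
  ring

end Aux11
section Aux12
set_option linter.unusedSectionVars false
set_option maxHeartbeats 1000000

variable {V E : Type} [Fintype V] [Fintype E] [DecidableEq V] [DecidableEq E]
variable (ends : E → V × V) (e0 : E)

lemma degree_subdiv_some (w : V) :
    degreeG (subdivEnds ends e0) (some w) = degreeG ends w := by
  classical
  unfold degreeG
  rw [Fintype.sum_sum_type]
  have h2 : (∑ u : Unit, ((if (subdivEnds ends e0 (Sum.inr u)).1 = some w then 1 else 0)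
      + (if (subdivEnds ends e0 (Sum.inr u)).2 = some w then 1 else 0)))
      = (if (ends e0).2 = w then 1 else 0) := by
    simp [subdivEnds]
  rw [h2]
  have h3 : ∀ f : E, ((if (subdivEnds ends e0 (Sum.inl f)).1 = some w then 1 else 0)
      + (if (subdivEnds ends e0 (Sum.inl f)).2 = some w then 1 else 0))
      + (if f = e0 then (if (ends e0).2 = w then 1 else 0) else 0)
      = ((if (ends f).1 = w then 1 else 0) + (if (ends f).2 = w then 1 else 0)) := by
    intro f
    by_cases hf : f = e0
    · subst hf; simp [subdivEnds]
    · simp [subdivEnds, hf]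
  calc (∑ f : E, ((if (subdivEnds ends e0 (Sum.inl f)).1 = some w then 1 else 0)
        + (if (subdivEnds ends e0 (Sum.inl f)).2 = some w then 1 else 0)))
        + (if (ends e0).2 = w then 1 else 0)
      = ∑ f : E, (((if (subdivEnds ends e0 (Sum.inl f)).1 = some w then 1 else 0)
        + (if (subdivEnds ends e0 (Sum.inl f)).2 = some w then 1 else 0))
        + (if f = e0 then (if (ends e0).2 = w then 1 else 0) else 0)) := by
        conv_rhs => rw [Finset.sum_add_distrib]
        rw [Finset.sum_ite_eq' Finset.univ e0 (fun _ => (if (ends e0).2 = w then 1 else 0))]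
        simp
    _ = ∑ f : E, ((if (ends f).1 = w then 1 else 0) + (if (ends f).2 = w then 1 else 0)) :=
        Finset.sum_congr rfl (fun f _ => h3 f)

lemma degree_subdiv_none : degreeG (subdivEnds ends e0) none = 2 := by
  classical
  unfold degreeG
  rw [Fintype.sum_sum_type]
  have h2 : (∑ u : Unit, ((if (subdivEnds ends e0 (Sum.inr u)).1 = (none : Option V) then 1 else 0)
      + (if (subdivEnds ends e0 (Sum.inr u)).2 = (none : Option V) then 1 else 0))) = 1 := by
    simp [subdivEnds]
  rw [h2]
  have h1 : (∑ f : E, ((if (subdivEnds ends e0 (Sum.inl f)).1 = (none : Option V) then 1 else 0)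
      + (if (subdivEnds ends e0 (Sum.inl f)).2 = (none : Option V) then 1 else 0)))
      = ∑ f : E, (if f = e0 then 1 else 0) := by
    refine Finset.sum_congr rfl (fun f _ => ?_)
    by_cases hf : f = e0
    · subst hf; simp [subdivEnds]
    · simp [subdivEnds, hf]
  rw [h1, Finset.sum_ite_eq' Finset.univ e0 (fun _ => 1)]
  simp

open scoped Classical in
lemma treePoly_pos (ℓ : E → ℝ) (hV : Nonempty V) (hG : ConnectedG ends)
    (hpos : ∀ f, 0 < ℓ f) : 0 < treePoly ends ℓ := by
  obtain ⟨T0, hcard, hconn⟩ := exists_spanning_tree ends hV hG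
  unfold treePoly
  refine Finset.sum_pos' (fun T _ => Finset.prod_nonneg (fun f _ => (hpos f).le))
    ⟨T0, ?_, Finset.prod_pos (fun f _ => hpos f)⟩
  simp only [Finset.mem_filter, Finset.mem_univ, true_and]
  exact ⟨hcard, hconn⟩

end Aux12

/-- Theorem `thm:curv-subdiv`: if `H` is obtained from `G` by subdividing
the edge `e0` into `e₁ ∪ e₂` with `ℓ_{e₁} + ℓ_{e₂} = ℓ_{e0}`, then
`K^G_{e0} = K^H_{e₁} + K^H_{e₂}`. -/
theorem curvature_subdivision
    {V E : Type} [Fintype V] [Fintype E] [DecidableEq V] [DecidableEq E]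
    (ends : E → V × V) (hG : ConnectedG ends)
    (ℓ : E → ℝ) (hpos : ∀ f, 0 < ℓ f) (e0 : E)
    (a b : ℝ) (ha : 0 < a) (hb : 0 < b) (hab : a + b = ℓ e0) :
    curv ends ℓ e0 =
      curv (subdivEnds ends e0) (subdivLen ℓ e0 a b) (Sum.inl e0)
      + curv (subdivEnds ends e0) (subdivLen ℓ e0 a b) (Sum.inr ()) := by
  classical
  have hV : Nonempty V := ⟨(ends e0).1⟩
  have hτG : treePoly ends ℓ = sigmaPoly ends e0 ℓ + ℓ e0 * tau0Poly ends e0 ℓ :=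
    treePoly_G_eq ends e0 ℓ
  have hτH : treePoly (subdivEnds ends e0) (subdivLen ℓ e0 a b)
      = sigmaPoly ends e0 ℓ + (a + b) * tau0Poly ends e0 ℓ :=
    treePoly_H_eq ends e0 ℓ a b hV
  have hpos' : 0 < treePoly ends ℓ := treePoly_pos ends ℓ hV hG hpos
  have hτpos : 0 < sigmaPoly ends e0 ℓ + (a + b) * tau0Poly ends e0 ℓ := by
    rw [hab, ← hτG]
    exact hpos'
  unfold curv effRes
  simp only [subdivEnds_inl_e0 ends e0, subdivEnds_inr ends e0]
  simp only [degree_subdiv_some ends e0, degree_subdiv_none ends e0,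
    subdivLen_inl_e0 e0 ℓ a b, subdivLen_inr e0 ℓ a b]
  rw [contract_G_eq ends e0 ℓ, contract_R1_eq ends e0 ℓ a b, contract_R2_eq ends e0 ℓ a b,
    hτG, hτH]
  rw [← hab]
  push_cast
  set s := sigmaPoly ends e0 ℓ with hs
  set t := tau0Poly ends e0 ℓ with ht
  have hne : s + (a + b) * t ≠ 0 := hτpos.ne'
  have hkey : ((a + b) * s / (s + (a + b) * t)) / (a + b) + 1
      = (a * s + a * (b * t)) / (s + (a + b) * t) / a
        + (b * s + a * (b * t)) / (s + (a + b) * t) / b := by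
    field_simp
    ring
  linear_combination -(1 : ℝ) * hkey
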